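/- arXiv:2407.07496 — 13 statements merged into one kernel-verified Lean document; each statement's English description precedes it below -/
import Mathlib

section
/- Let β > 0, μ ≥ 0 and p ∈ ℕ. Then there exists a unique real number λ in the open interval (μ² + π²p²/4, μ² + π²(p+1)²/4) such that, writing s = √(λ − μ²), one has (β·sin s + s·cos s)·(β·cos s − s·sin s) = 0. -/
open Real Set

/-!
With `θ(s) = s + arctan (s / β)`, harmonic addition gives `β sin s + s cos s = √(β² + s²) sin θ` and
`β cos s - s sin s = √(β² + s²) cos θ`, so the product is `(β² + s²) sin (2θ) / 2`. For
`s ∈ (pπ/2, (p+1)π/2)` the angle `2θ` lies in `(pπ, (p+2)π)`, where the only zero of `sin` is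
`(p+1)π`. Since `θ` is continuous and strictly increasing, `θ(s) = (p+1)π/2` has exactly one
solution `s` in that interval, and `λ = μ² + s²` transports it to the interval for `λ`.
-/

theorem existsUnique_mem_Ioo_eq_of_strictMonoOn {α δ : Type*} [ConditionallyCompleteLinearOrder α]
    [TopologicalSpace α] [OrderTopology α] [DenselyOrdered α] [LinearOrder δ] [TopologicalSpace δ]
    [OrderClosedTopology δ] {f : α → δ} {a b : α} {c : δ} (hab : a ≤ b)
    (hf : StrictMonoOn f (Icc a b)) (hcont : ContinuousOn f (Icc a b)) (hc : c ∈ Ioo (f a) (f b)) :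
    ∃! x, x ∈ Ioo a b ∧ f x = c := by
  obtain ⟨x, hx, hfx⟩ := intermediate_value_Ioo hab hcont hc
  exact ⟨x, ⟨hx, hfx⟩, fun y ⟨hy, hfy⟩ ↦
    hf.injOn (Ioo_subset_Icc_self hy) (Ioo_subset_Icc_self hx) (hfy.trans hfx.symm)⟩

theorem existsUnique_sqrt_sub_mem_Ioo {P : ℝ → Prop} {a b : ℝ} (c : ℝ) (ha : 0 ≤ a)
    (h : ∃! s, s ∈ Ioo a b ∧ P s) :
    ∃! t, t ∈ Ioo (c + a ^ 2) (c + b ^ 2) ∧ P (√(t - c)) := by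
  obtain ⟨s, ⟨hs, hPs⟩, huniq⟩ := h
  have hs0 : 0 ≤ s := ha.trans hs.1.le
  refine ⟨c + s ^ 2, ⟨⟨?_, ?_⟩, ?_⟩, ?_⟩
  · gcongr; exact hs.1
  · gcongr; exact hs.2
  · simpa [hs0] using hPs
  · rintro t ⟨⟨hta, htb⟩, hPt⟩
    have hmem : √(t - c) ∈ Ioo a b := by
      constructor
      · exact (lt_sqrt ha).2 (by linarith)
      · exact (sqrt_lt' (ha.trans_lt hs.1 |>.trans hs.2)).2 (by linarith)
    have hts := huniq _ ⟨hmem, hPt⟩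
    rw [← hts, sq_sqrt (by nlinarith)]
    ring

theorem sqrt_sq_add_sq_eq_mul_sqrt_one_add_div_sq {a : ℝ} (ha : 0 < a) (b : ℝ) :
    √(a ^ 2 + b ^ 2) = a * √(1 + (b / a) ^ 2) := by
  rw [← sqrt_sq ha.le, ← sqrt_mul (sq_nonneg a), sqrt_sq ha.le]
  congr 1
  field_simp

theorem mul_sin_add_mul_cos_eq {a : ℝ} (ha : 0 < a) (b x : ℝ) :
    a * sin x + b * cos x = √(a ^ 2 + b ^ 2) * sin (x + arctan (b / a)) := by
  have : √(1 + (b / a) ^ 2) ≠ 0 := by positivity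
  rw [sin_add, sin_arctan, cos_arctan, sqrt_sq_add_sq_eq_mul_sqrt_one_add_div_sq ha]
  field_simp

theorem mul_cos_sub_mul_sin_eq {a : ℝ} (ha : 0 < a) (b x : ℝ) :
    a * cos x - b * sin x = √(a ^ 2 + b ^ 2) * cos (x + arctan (b / a)) := by
  have : √(1 + (b / a) ^ 2) ≠ 0 := by positivity
  rw [cos_add, sin_arctan, cos_arctan, sqrt_sq_add_sq_eq_mul_sqrt_one_add_div_sq ha]
  field_simp

theorem mul_sin_add_mul_cos_mul_mul_cos_sub_mul_sin {a : ℝ} (ha : 0 < a) (b x : ℝ) :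
    (a * sin x + b * cos x) * (a * cos x - b * sin x) =
      (a ^ 2 + b ^ 2) / 2 * sin (2 * (x + arctan (b / a))) := by
  rw [mul_sin_add_mul_cos_eq ha, mul_cos_sub_mul_sin_eq ha, sin_two_mul]
  linear_combination sin (x + arctan (b / a)) * cos (x + arctan (b / a)) *
    mul_self_sqrt (add_nonneg (sq_nonneg a) (sq_nonneg b))

theorem sin_eq_zero_iff_of_mem_Ioo (n : ℤ) {y : ℝ} (hy : y ∈ Ioo ((n - 1) * π) ((n + 1) * π)) :
    sin y = 0 ↔ y = n * π := by
  have h := sin_eq_zero_iff_of_lt_of_lt (x := y - n * π) (by linarith [hy.1]) (by linarith [hy.2])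
  rw [sin_sub_int_mul_pi, mul_eq_zero_iff_left (zpow_ne_zero n (by norm_num)), sub_eq_zero] at h
  exact h

theorem strictMono_add_arctan_div {β : ℝ} (hβ : 0 < β) : StrictMono fun s ↦ s + arctan (s / β) :=
  strictMono_id.add (arctan_strictMono.comp (strictMono_div_right_of_pos hβ))

theorem add_arctan_div_mem_Ioo {β : ℝ} (hβ : 0 < β) {s : ℝ} (hs : 0 < s) :
    s + arctan (s / β) ∈ Ioo s (s + π / 2) :=
  ⟨lt_add_of_pos_right s (arctan_pos.2 (div_pos hs hβ)),
    add_lt_add_right (arctan_lt_pi_div_two _) s⟩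

theorem mul_sin_add_mul_cos_mul_mul_cos_sub_mul_sin_self_eq_zero_iff {β : ℝ} (hβ : 0 < β) (p : ℕ)
    {s : ℝ} (hs : s ∈ Ioo (p * π / 2) ((p + 1) * π / 2)) :
    (β * sin s + s * cos s) * (β * cos s - s * sin s) = 0 ↔
      s + arctan (s / β) = (p + 1) * π / 2 := by
  have hs0 : 0 < s := lt_of_le_of_lt (by positivity) hs.1
  have hθ := add_arctan_div_mem_Ioo hβ hs0
  have h2θ : 2 * (s + arctan (s / β)) ∈
      Ioo ((((p + 1 : ℤ) : ℝ) - 1) * π) ((((p + 1 : ℤ) : ℝ) + 1) * π) := by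
    push_cast
    constructor <;> linarith [hs.1, hs.2, hθ.1, hθ.2]
  rw [mul_sin_add_mul_cos_mul_mul_cos_sub_mul_sin hβ, mul_eq_zero_iff_left (by positivity),
    sin_eq_zero_iff_of_mem_Ioo _ h2θ]
  push_cast
  constructor <;> intro h <;> linarith

theorem existsUnique_add_arctan_div_eq {β : ℝ} (hβ : 0 < β) (p : ℕ) :
    ∃! s, s ∈ Ioo (p * π / 2) ((p + 1) * π / 2) ∧ s + arctan (s / β) = (p + 1) * π / 2 := by
  have hpos : 0 < (p + 1) * π / 2 := by positivity
  refine existsUnique_mem_Ioo_eq_of_strictMonoOn (by linarith [pi_pos])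
    ((strictMono_add_arctan_div hβ).strictMonoOn _) (by fun_prop) ⟨?_, ?_⟩
  · linarith [arctan_lt_pi_div_two (p * π / 2 / β)]
  · exact (add_arctan_div_mem_Ioo hβ hpos).1

theorem stmt_0_general (β μ : ℝ) (hβ : 0 < β) (p : ℕ) :
    ∃! lam : ℝ,
      lam ∈ Set.Ioo (μ ^ 2 + π ^ 2 * (p : ℝ) ^ 2 / 4)
        (μ ^ 2 + π ^ 2 * ((p : ℝ) + 1) ^ 2 / 4) ∧
      (β * Real.sin (Real.sqrt (lam - μ ^ 2)) +
          Real.sqrt (lam - μ ^ 2) * Real.cos (Real.sqrt (lam - μ ^ 2))) *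
        (β * Real.cos (Real.sqrt (lam - μ ^ 2)) -
          Real.sqrt (lam - μ ^ 2) * Real.sin (Real.sqrt (lam - μ ^ 2))) = 0 := by
  have hroots : ∃! s, s ∈ Ioo (p * π / 2) ((p + 1) * π / 2) ∧
      (β * sin s + s * cos s) * (β * cos s - s * sin s) = 0 :=
    (existsUnique_congr fun s ↦ and_congr_right fun hs ↦
      mul_sin_add_mul_cos_mul_mul_cos_sub_mul_sin_self_eq_zero_iff hβ p hs).2
      (existsUnique_add_arctan_div_eq hβ p)
  convert existsUnique_sqrt_sub_mem_Ioo (μ ^ 2) (by positivity) hroots using 5 <;> ring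

/-- For β > 0, μ ≥ 0 and p ∈ ℕ there is a unique eigenvalue parameter λ in
(μ² + π²p²/4, μ² + π²(p+1)²/4) with (β sin s + s cos s)(β cos s − s sin s) = 0,
where s = √(λ − μ²). -/
theorem stmt_0 (β μ : ℝ) (hβ : 0 < β) (hμ : 0 ≤ μ) (p : ℕ) :
    ∃! lam : ℝ,
      lam ∈ Set.Ioo (μ ^ 2 + π ^ 2 * (p : ℝ) ^ 2 / 4)
        (μ ^ 2 + π ^ 2 * ((p : ℝ) + 1) ^ 2 / 4) ∧
      (β * Real.sin (Real.sqrt (lam - μ ^ 2)) +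
          Real.sqrt (lam - μ ^ 2) * Real.cos (Real.sqrt (lam - μ ^ 2))) *
        (β * Real.cos (Real.sqrt (lam - μ ^ 2)) -
          Real.sqrt (lam - μ ^ 2) * Real.sin (Real.sqrt (lam - μ ^ 2))) = 0 :=
  stmt_0_general β μ hβ p
end

section
/- Let β > 0, μ > 0 and p ∈ ℕ. Then there exists a unique real number Λ in the open interval (μ² + π²(1+p)²/4, μ² + π²(2+p)²/4) such that, writing s = √(Λ − μ²), one has [β·s·sin s·cosh μ + (Λ·cosh μ + β·μ·sinh μ)·cos s] · [β·s·cos s·sinh μ − (Λ·sinh μ + β·μ·cosh μ)·sin s] = 0. -/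
/-!
Write `Λ = μ² + s²` with `s > 0`. Both factors have the shape `b s sin θ + (q s² + c) cos θ`
with `b, q, c > 0`: the first with `θ = s`, the second with `θ = s + π/2`. On the quarter period
`(a, a + π/2)`, `a = (p+1)π/2`, one factor has its phase in the first quadrant modulo `π`, where
both terms have the same sign, so it does not vanish. The other one is, up to a sign,
`b s cos t - (q s² + c) sin t` with `t = s - a ∈ (0, π/2)`: it is positive at `t = 0`, negative
at `t = π/2`, and its zeros are those of `b s cot t - q s² - c`, which is strictly decreasing
because `sin t cos t < t ≤ s`.
-/

open Real Set

noncomputable def eigenFactor (b q c s θ : ℝ) : ℝ :=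
  b * s * sin θ + (q * s ^ 2 + c) * cos θ

section eigenFactor

variable {b q c s θ : ℝ}

lemma eigenFactor_add_pi_div_two :
    eigenFactor b q c s (θ + π / 2) = b * s * cos θ - (q * s ^ 2 + c) * sin θ := by
  rw [eigenFactor, sin_add_pi_div_two, cos_add_pi_div_two]
  ring

lemma eigenFactor_add_nat_mul_pi (m : ℕ) :
    eigenFactor b q c s (θ + m * π) = (-1) ^ m * eigenFactor b q c s θ := by
  rw [eigenFactor, eigenFactor, sin_add_nat_mul_pi, cos_add_nat_mul_pi]
  ring

lemma eigenFactor_eq_zero_iff_of_eq_add_nat_mul_pi {θ' : ℝ} (m : ℕ) (h : θ = θ' + m * π) :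
    eigenFactor b q c s θ = 0 ↔ eigenFactor b q c s θ' = 0 := by
  rw [h, eigenFactor_add_nat_mul_pi]
  simp

lemma eigenFactor_pos (hb : 0 ≤ b) (hq : 0 ≤ q) (hc : 0 < c) (hs : 0 ≤ s)
    (hθ : θ ∈ Ioo 0 (π / 2)) : 0 < eigenFactor b q c s θ := by
  have hsin : 0 < sin θ := sin_pos_of_pos_of_lt_pi hθ.1 (by linarith [hθ.2, pi_pos])
  have hcos : 0 < cos θ := cos_pos_of_mem_Ioo ⟨by linarith [hθ.1, pi_pos], hθ.2⟩
  have : 0 ≤ b * s * sin θ := by positivity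
  have : 0 < (q * s ^ 2 + c) * cos θ := by positivity
  unfold eigenFactor
  linarith

lemma eigenFactor_ne_zero_of_eq_add_nat_mul_pi {t : ℝ} (m : ℕ) (h : θ = t + m * π)
    (hb : 0 ≤ b) (hq : 0 ≤ q) (hc : 0 < c) (hs : 0 ≤ s) (ht : t ∈ Ioo 0 (π / 2)) :
    eigenFactor b q c s θ ≠ 0 := by
  rw [h, eigenFactor_add_nat_mul_pi]
  exact mul_ne_zero (pow_ne_zero _ (by norm_num)) (eigenFactor_pos hb hq hc hs ht).ne'

end eigenFactor

lemma strictAntiOn_mul_cot_sub_sq {a b q : ℝ} (ha : 0 ≤ a) (hb : 0 < b) (hq : 0 ≤ q) :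
    StrictAntiOn (fun s => b * s * (cos (s - a) / sin (s - a)) - q * s ^ 2)
      (Ioo a (a + π / 2)) := by
  have hsin : ∀ s ∈ Ioo a (a + π / 2), 0 < sin (s - a) := fun s hs =>
    sin_pos_of_pos_of_lt_pi (by linarith [hs.1]) (by linarith [hs.2, pi_pos])
  have hderiv : ∀ s ∈ Ioo a (a + π / 2), HasDerivAt
      (fun s => b * s * (cos (s - a) / sin (s - a)) - q * s ^ 2)
      (b * (cos (s - a) / sin (s - a)) - b * s / sin (s - a) ^ 2 - 2 * q * s) s := by
    intro s hs
    have hcot : HasDerivAt (fun s => cos (s - a) / sin (s - a))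
        ((-sin (s - a) * sin (s - a) - cos (s - a) * cos (s - a)) / sin (s - a) ^ 2) s :=
      ((hasDerivAt_cos _).comp_sub_const s a).div ((hasDerivAt_sin _).comp_sub_const s a)
        (hsin s hs).ne'
    refine (((hasDerivAt_id' s).const_mul b).mul hcot |>.sub
      ((hasDerivAt_pow 2 s).const_mul q)).congr_deriv ?_
    rw [show -sin (s - a) * sin (s - a) - cos (s - a) * cos (s - a) = -1 by
      linear_combination -sin_sq_add_cos_sq (s - a)]
    push_cast
    ring
  refine strictAntiOn_of_deriv_neg (convex_Ioo _ _)
    (fun s hs => (hderiv s hs).continuousAt.continuousWithinAt) fun s hs => ?_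
  rw [interior_Ioo] at hs
  rw [(hderiv s hs).deriv]
  have hsin_s := hsin s hs
  -- `sin t cos t ≤ sin t < t ≤ s`
  have hsc : sin (s - a) * cos (s - a) < s := by
    nlinarith [sin_lt (by linarith [hs.1] : 0 < s - a), cos_le_one (s - a)]
  have : b * (sin (s - a) * cos (s - a) - s) - 2 * q * s * sin (s - a) ^ 2 < 0 := by
    nlinarith [mul_nonneg (mul_nonneg hq (by linarith [hs.1] : 0 ≤ s)) (sq_nonneg (sin (s - a)))]
  rw [show b * (cos (s - a) / sin (s - a)) - b * s / sin (s - a) ^ 2 - 2 * q * s =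
    (b * (sin (s - a) * cos (s - a) - s) - 2 * q * s * sin (s - a) ^ 2) / sin (s - a) ^ 2 by
      field_simp]
  exact div_neg_of_neg_of_pos this (by positivity)

lemma existsUnique_eigenFactor_eq_zero {a b q c : ℝ} (ha : 0 < a) (hb : 0 < b) (hq : 0 ≤ q)
    (hc : 0 < c) :
    ∃! s, s ∈ Ioo a (a + π / 2) ∧ eigenFactor b q c s (s - a + π / 2) = 0 := by
  have hf : ∀ s, eigenFactor b q c s (s - a + π / 2) =
      b * s * cos (s - a) - (q * s ^ 2 + c) * sin (s - a) := fun s => eigenFactor_add_pi_div_two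
  have hcont :
      ContinuousOn (fun s => eigenFactor b q c s (s - a + π / 2)) (Icc a (a + π / 2)) := by
    unfold eigenFactor
    fun_prop
  have hleft : 0 < eigenFactor b q c a (a - a + π / 2) := by
    rw [hf, sub_self, cos_zero, sin_zero]; nlinarith
  have hright : eigenFactor b q c (a + π / 2) (a + π / 2 - a + π / 2) < 0 := by
    rw [hf, add_sub_cancel_left, cos_pi_div_two, sin_pi_div_two]
    nlinarith [pi_pos, sq_nonneg (a + π / 2)]
  obtain ⟨s₀, hs₀, hzero₀⟩ :=
    intermediate_value_Ioo' (by linarith [pi_pos]) hcont ⟨hright, hleft⟩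
  refine ⟨s₀, ⟨hs₀, hzero₀⟩, fun s ⟨hs, hzero⟩ => ?_⟩
  have hcot : ∀ s ∈ Ioo a (a + π / 2), eigenFactor b q c s (s - a + π / 2) = 0 →
      b * s * (cos (s - a) / sin (s - a)) - q * s ^ 2 = c := by
    intro s hs hzero
    have : sin (s - a) ≠ 0 :=
      (sin_pos_of_pos_of_lt_pi (by linarith [hs.1]) (by linarith [hs.2, pi_pos])).ne'
    rw [hf] at hzero
    field_simp
    linear_combination hzero
  exact (strictAntiOn_mul_cot_sub_sq ha.le hb hq).injOn hs hs₀
    ((hcot s hs hzero).trans (hcot s₀ hs₀ hzero₀).symm)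

lemma existsUnique_eigenFactor_mul_eq_zero {b q c b' q' c' : ℝ} (n : ℕ)
    (hb : 0 < b) (hq : 0 ≤ q) (hc : 0 < c) (hb' : 0 < b') (hq' : 0 ≤ q') (hc' : 0 < c') :
    ∃! s, s ∈ Ioo ((1 + n) * π / 2) ((1 + n) * π / 2 + π / 2) ∧
      eigenFactor b q c s s * eigenFactor b' q' c' s (s + π / 2) = 0 := by
  set a := (1 + n) * π / 2 with ha_def
  have ha : 0 < a := by positivity
  have ht : ∀ s ∈ Ioo a (a + π / 2), s - a ∈ Ioo 0 (π / 2) := fun s hs =>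
    ⟨by linarith [hs.1], by linarith [hs.2]⟩
  obtain ⟨m, rfl | rfl⟩ := Nat.even_or_odd' n
  · refine (existsUnique_congr fun s => and_congr_right fun hs => ?_).1
      (existsUnique_eigenFactor_eq_zero ha hb hq hc)
    rw [mul_eq_zero, or_iff_left (eigenFactor_ne_zero_of_eq_add_nat_mul_pi (m + 1)
      (by rw [ha_def]; push_cast; ring) hb'.le hq' hc' (by linarith [hs.1]) (ht s hs)),
      eigenFactor_eq_zero_iff_of_eq_add_nat_mul_pi (θ := s) (θ' := s - a + π / 2) m
        (by rw [ha_def]; push_cast; ring)]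
  · refine (existsUnique_congr fun s => and_congr_right fun hs => ?_).1
      (existsUnique_eigenFactor_eq_zero ha hb' hq' hc')
    rw [mul_eq_zero, or_iff_right (eigenFactor_ne_zero_of_eq_add_nat_mul_pi (m + 1)
      (by rw [ha_def]; push_cast; ring) hb.le hq hc (by linarith [hs.1]) (ht s hs)),
      eigenFactor_eq_zero_iff_of_eq_add_nat_mul_pi (θ := s + π / 2) (θ' := s - a + π / 2)
        (m + 1) (by rw [ha_def]; push_cast; ring)]

lemma existsUnique_sqrt_sub_of_existsUnique {R : ℝ → ℝ → Prop} {a b c : ℝ} (ha : 0 ≤ a)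
    (h : ∃! s, s ∈ Ioo a b ∧ R (c + s ^ 2) s) :
    ∃! Λ, Λ ∈ Ioo (c + a ^ 2) (c + b ^ 2) ∧ R Λ √(Λ - c) := by
  obtain ⟨s, ⟨hs, hR⟩, huniq⟩ := h
  have hs0 : 0 ≤ s := ha.trans hs.1.le
  have hb : 0 < b := ha.trans_lt (hs.1.trans hs.2)
  refine ⟨c + s ^ 2, ⟨⟨?_, ?_⟩, ?_⟩, fun Λ ⟨hΛ, hRΛ⟩ => ?_⟩
  · nlinarith [hs.1]
  · nlinarith [hs.2]
  · rwa [add_sub_cancel_left, sqrt_sq hs0]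
  · have hΛ' : c + √(Λ - c) ^ 2 = Λ := by
      rw [sq_sqrt (by nlinarith [hΛ.1])]; ring
    have hmem : √(Λ - c) ∈ Ioo a b :=
      ⟨(lt_sqrt ha).2 (by linarith [hΛ.1]), (sqrt_lt' hb).2 (by linarith [hΛ.2])⟩
    rw [← hΛ', huniq _ ⟨hmem, hΛ'.symm ▸ hRΛ⟩]

/-- For β > 0, μ > 0 and p ∈ ℕ there is a unique eigenvalue Λ in
(μ² + π²(1+p)²/4, μ² + π²(2+p)²/4) satisfying, with s = √(Λ − μ²),
[β s sin s cosh μ + (Λ cosh μ + β μ sinh μ) cos s]·[β s cos s sinh μ − (Λ sinh μ + β μ cosh μ) sin s] = 0. -/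
theorem stmt_1 (β μ : ℝ) (hβ : 0 < β) (hμ : 0 < μ) (p : ℕ) :
    ∃! Λ : ℝ,
      Λ ∈ Set.Ioo (μ ^ 2 + π ^ 2 * (1 + (p : ℝ)) ^ 2 / 4)
        (μ ^ 2 + π ^ 2 * (2 + (p : ℝ)) ^ 2 / 4) ∧
      (β * Real.sqrt (Λ - μ ^ 2) * Real.sin (Real.sqrt (Λ - μ ^ 2)) * Real.cosh μ +
          (Λ * Real.cosh μ + β * μ * Real.sinh μ) * Real.cos (Real.sqrt (Λ - μ ^ 2))) *
        (β * Real.sqrt (Λ - μ ^ 2) * Real.cos (Real.sqrt (Λ - μ ^ 2)) * Real.sinh μ -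
          (Λ * Real.sinh μ + β * μ * Real.cosh μ) * Real.sin (Real.sqrt (Λ - μ ^ 2))) = 0 := by
  have hcosh := cosh_pos μ
  have hsinh := sinh_pos_iff.2 hμ
  have hfactors := existsUnique_eigenFactor_mul_eq_zero p
    (b := β * cosh μ) (q := cosh μ) (c := μ ^ 2 * cosh μ + β * μ * sinh μ)
    (b' := β * sinh μ) (q' := sinh μ) (c' := μ ^ 2 * sinh μ + β * μ * cosh μ)
    (by positivity) hcosh.le (by positivity) (by positivity) hsinh.le (by positivity)
  rw [show μ ^ 2 + π ^ 2 * (1 + (p : ℝ)) ^ 2 / 4 = μ ^ 2 + ((1 + p) * π / 2) ^ 2 by ring,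
    show μ ^ 2 + π ^ 2 * (2 + (p : ℝ)) ^ 2 / 4 = μ ^ 2 + ((1 + p) * π / 2 + π / 2) ^ 2 by
      ring]
  refine existsUnique_sqrt_sub_of_existsUnique (by positivity) (R := fun Λ s =>
    (β * s * sin s * cosh μ + (Λ * cosh μ + β * μ * sinh μ) * cos s) *
      (β * s * cos s * sinh μ - (Λ * sinh μ + β * μ * cosh μ) * sin s) = 0) ?_
  refine (existsUnique_congr fun s => and_congr_right fun _ => ?_).1 hfactors
  simp only [eigenFactor, sin_add_pi_div_two, cos_add_pi_div_two]
  ring_nf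
end

section
/- Let p ∈ ℕ and let 0 < β₁ < β₂. Suppose s₁ and s₂ both lie in the open interval (pπ/2, (p+1)π/2) and satisfy (β₁·sin s₁ + s₁·cos s₁)·(β₁·cos s₁ − s₁·sin s₁) = 0 and (β₂·sin s₂ + s₂·cos s₂)·(β₂·cos s₂ − s₂·sin s₂) = 0, respectively. Then s₁ < s₂. -/
/-!
With `θ = arctan (s / β)` and `r = √(β² + s²)` one has `β = r cos θ` and `s = r sin θ`, so the
two factors of the eigenvalue equation are `r sin (s + θ)` and `r cos (s + θ)`, and the equation
says `sin (2 (s + θ)) = 0`. For `s` in the `p`-th quarter period this forces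
`s + arctan (s / β) = (p + 1) π / 2`. The left side increases in `s` and decreases in `β`, so a
larger `β` needs a larger `s`.
-/

open Real

namespace Real

lemma cos_arctan_div {β : ℝ} (s : ℝ) (hβ : 0 < β) :
    cos (arctan (s / β)) = β / √(β ^ 2 + s ^ 2) := by
  rw [cos_arctan, show 1 + (s / β) ^ 2 = (β ^ 2 + s ^ 2) / β ^ 2 by field_simp,
    sqrt_div' _ (sq_nonneg β), sqrt_sq hβ.le, one_div_div]

lemma sin_arctan_div {β : ℝ} (s : ℝ) (hβ : 0 < β) :
    sin (arctan (s / β)) = s / √(β ^ 2 + s ^ 2) := by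
  have hr : 0 < √(β ^ 2 + s ^ 2) := sqrt_pos.mpr (by positivity)
  rw [sin_arctan, div_eq_mul_one_div _ (√_), ← cos_arctan, cos_arctan_div s hβ]
  field_simp

lemma mul_sin_add_mul_cos {β : ℝ} (s : ℝ) (hβ : 0 < β) :
    β * sin s + s * cos s = √(β ^ 2 + s ^ 2) * sin (s + arctan (s / β)) := by
  have hr : 0 < √(β ^ 2 + s ^ 2) := sqrt_pos.mpr (by positivity)
  rw [sin_add, cos_arctan_div s hβ, sin_arctan_div s hβ]
  field_simp

lemma mul_cos_sub_mul_sin {β : ℝ} (s : ℝ) (hβ : 0 < β) :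
    β * cos s - s * sin s = √(β ^ 2 + s ^ 2) * cos (s + arctan (s / β)) := by
  have hr : 0 < √(β ^ 2 + s ^ 2) := sqrt_pos.mpr (by positivity)
  rw [cos_add, cos_arctan_div s hβ, sin_arctan_div s hβ]
  field_simp

lemma eq_of_sin_two_mul_eq_zero {x : ℝ} {p : ℤ} (h : sin (2 * x) = 0)
    (hx : x ∈ Set.Ioo (p * π / 2) ((p + 2) * π / 2)) : x = (p + 1) * π / 2 := by
  obtain ⟨n, hn⟩ := sin_eq_zero_iff.mp h
  have hlt : p < n := by
    have : (p : ℝ) * π < n * π := by linarith [hx.1]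
    exact_mod_cast lt_of_mul_lt_mul_right this pi_pos.le
  have hgt : n < p + 2 := by
    have : (n : ℝ) * π < (p + 2) * π := by linarith [hx.2]
    exact_mod_cast lt_of_mul_lt_mul_right this pi_pos.le
  obtain rfl : n = p + 1 := by omega
  push_cast at hn
  linarith

end Real

lemma add_arctan_div_eq_of_eigen (p : ℕ) {β s : ℝ} (hβ : 0 < β)
    (hs : s ∈ Set.Ioo ((p : ℝ) * π / 2) (((p : ℝ) + 1) * π / 2))
    (he : (β * sin s + s * cos s) * (β * cos s - s * sin s) = 0) :
    s + arctan (s / β) = ((p : ℝ) + 1) * π / 2 := by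
  have hs₀ : 0 < s := lt_of_le_of_lt (by positivity) hs.1
  have hθ₀ : 0 < arctan (s / β) := arctan_pos.mpr (div_pos hs₀ hβ)
  have hsin : sin (2 * (s + arctan (s / β))) = 0 := by
    have hr : 0 < √(β ^ 2 + s ^ 2) := sqrt_pos.mpr (by positivity)
    rw [mul_sin_add_mul_cos s hβ, mul_cos_sub_mul_sin s hβ] at he
    rw [sin_two_mul]
    nlinarith [mul_pos hr hr]
  have := eq_of_sin_two_mul_eq_zero (p := p) hsin
  push_cast at this
  exact this ⟨by linarith [hs.1], by linarith [hs.2, arctan_lt_pi_div_two (s / β)]⟩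

lemma lt_of_add_arctan_div_eq {β₁ β₂ s₁ s₂ : ℝ} (hβ₁ : 0 < β₁) (hβ : β₁ < β₂) (hs₂ : 0 < s₂)
    (h : s₁ + arctan (s₁ / β₁) = s₂ + arctan (s₂ / β₂)) : s₁ < s₂ := by
  by_contra! hle
  have hdiv : s₂ / β₂ < s₁ / β₁ :=
    calc s₂ / β₂ < s₂ / β₁ := div_lt_div_of_pos_left hs₂ hβ₁ hβ
      _ ≤ s₁ / β₁ := div_le_div_of_nonneg_right hle hβ₁.le
  linarith [arctan_strictMono hdiv]

/-- Monotonicity in β of the constant-pressure eigenvalue branch: if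
0 < β₁ < β₂ and s₁, s₂ ∈ (pπ/2, (p+1)π/2) satisfy the eigenvalue equation
for β₁, β₂ respectively, then s₁ < s₂. -/
theorem stmt_3 (p : ℕ) (β₁ β₂ s₁ s₂ : ℝ) (hβ₁ : 0 < β₁) (hβ : β₁ < β₂)
    (hs₁ : s₁ ∈ Set.Ioo ((p : ℝ) * π / 2) (((p : ℝ) + 1) * π / 2))
    (hs₂ : s₂ ∈ Set.Ioo ((p : ℝ) * π / 2) (((p : ℝ) + 1) * π / 2))
    (he₁ : (β₁ * Real.sin s₁ + s₁ * Real.cos s₁) *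
      (β₁ * Real.cos s₁ - s₁ * Real.sin s₁) = 0)
    (he₂ : (β₂ * Real.sin s₂ + s₂ * Real.cos s₂) *
      (β₂ * Real.cos s₂ - s₂ * Real.sin s₂) = 0) :
    s₁ < s₂ := by
  have hs₂₀ : 0 < s₂ := lt_of_le_of_lt (by positivity) hs₂.1
  refine lt_of_add_arctan_div_eq hβ₁ hβ hs₂₀ ?_
  rw [add_arctan_div_eq_of_eigen p hβ₁ hs₁ he₁,
    add_arctan_div_eq_of_eigen p (hβ₁.trans hβ) hs₂ he₂]
end

section
/- Let p ∈ ℕ and let S : ℝ → ℝ be a function such that for every β > 0 one has S(β) ∈ (pπ/2, (p+1)π/2) and (β·sin(S(β)) + S(β)·cos(S(β)))·(β·cos(S(β)) − S(β)·sin(S(β))) = 0. Then S(β) tends to (p+1)π/2 as β → +∞. -/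
open Real Filter

lemma sin_cos_sign_aux (p : ℕ) (x : ℝ)
    (h1 : (p : ℝ) * π / 2 < x) (h2 : x < ((p : ℝ) + 1) * π / 2) :
    0 < (-1 : ℝ) ^ p * (Real.sin x * Real.cos x) := by
  have hy : 0 < 2 * x - (p : ℝ) * π := by linarith
  have hy' : 2 * x - (p : ℝ) * π < π := by linarith
  have hsy : 0 < Real.sin (2 * x - (p : ℝ) * π) :=
    Real.sin_pos_of_pos_of_lt_pi hy hy'
  have h2x : Real.sin (2 * x) = (-1 : ℝ) ^ p * Real.sin (2 * x - (p : ℝ) * π) := by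
    have := Real.sin_add_int_mul_pi (2 * x - (p : ℝ) * π) (p : ℤ)
    simp only [Int.cast_natCast, zpow_natCast] at this
    rw [← this]; ring_nf
  have hst : Real.sin (2 * x) = 2 * (Real.sin x * Real.cos x) := by
    rw [Real.sin_two_mul]; ring
  have hsq : ((-1 : ℝ) ^ p) ^ 2 = 1 := by
    rw [← pow_mul, mul_comm, pow_mul]; norm_num
  have key : (-1 : ℝ) ^ p * (Real.sin x * Real.cos x)
      = Real.sin (2 * x - (p : ℝ) * π) / 2 := by
    linear_combination ((-1 : ℝ) ^ p / 2) * h2x - ((-1 : ℝ) ^ p / 2) * hst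
      + (Real.sin (2 * x - (p : ℝ) * π) / 2) * hsq
  rw [key]; linarith

lemma key_bound (p : ℕ) (β t : ℝ) (hβ : 0 < β)
    (h1 : (p : ℝ) * π / 2 < t) (h2 : t < ((p : ℝ) + 1) * π / 2)
    (heq : (β * Real.sin t + t * Real.cos t) * (β * Real.cos t - t * Real.sin t) = 0) :
    |t - ((p : ℝ) + 1) * π / 2| ≤ (π * (((p : ℝ) + 1) * π / 2) / 2) / β := by
  set b : ℝ := ((p : ℝ) + 1) * π / 2 with hb
  have hπ : 0 < π := Real.pi_pos
  have hpnn : (0 : ℝ) ≤ (p : ℝ) * π / 2 := by positivity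
  have ht0 : 0 < t := lt_of_le_of_lt hpnn h1
  have hbt : t < b := h2
  have hbma : b - (p : ℝ) * π / 2 = π / 2 := by rw [hb]; ring
  have htb2 : b - t < π / 2 := by linarith
  have hsign := sin_cos_sign_aux p t h1 h2
  -- the key claim: |sin (t - b)| ≤ t / β
  have hkey : |Real.sin (t - b)| ≤ t / β := by
    rcases Nat.even_or_odd p with hp | hp
    · -- p even : sin t cos t > 0, first factor nonzero, and |sin(t-b)| = |cos t|
      have hpow : (-1 : ℝ) ^ p = 1 := hp.neg_one_pow
      rw [hpow, one_mul] at hsign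
      rcases mul_eq_zero.mp heq with h | h
      · exfalso
        have h2' : β * Real.sin t ^ 2 = -(t * (Real.sin t * Real.cos t)) := by
          linear_combination Real.sin t * h
        nlinarith [mul_pos ht0 hsign, mul_nonneg hβ.le (sq_nonneg (Real.sin t))]
      · -- β cos t = t sin t
        obtain ⟨m, hm⟩ := hp
        have hbval : b = (m : ℝ) * π + π / 2 := by
          rw [hb, hm]; push_cast; ring
        have hcb : Real.cos b = 0 := by
          rw [hbval, Real.cos_add_pi_div_two, Real.sin_nat_mul_pi, neg_zero]
        have hsb : |Real.sin b| = 1 := by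
          rw [hbval, Real.sin_add_pi_div_two]
          exact_mod_cast Real.abs_cos_int_mul_pi m
        have : |Real.sin (t - b)| = |Real.cos t| := by
          rw [Real.sin_sub, hcb, mul_zero, zero_sub, abs_neg, abs_mul, hsb, mul_one]
        rw [this]
        have hct : Real.cos t = t * Real.sin t / β := by
          field_simp; linarith
        rw [hct, abs_div, abs_mul, abs_of_pos hβ, abs_of_pos ht0]
        have : |Real.sin t| ≤ 1 := Real.abs_sin_le_one _
        calc t * |Real.sin t| / β ≤ t * 1 / β := by gcongr
          _ = t / β := by ring
    · -- p odd : sin t cos t < 0, second factor nonzero, and |sin(t-b)| = |sin t|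
      have hpow : (-1 : ℝ) ^ p = -1 := hp.neg_one_pow
      rw [hpow, neg_one_mul, neg_pos] at hsign
      rcases mul_eq_zero.mp heq with h | h
      · -- β sin t = - t cos t
        obtain ⟨m, hm⟩ := hp
        have hbval : b = ((m : ℝ) + 1) * π := by
          rw [hb, hm]; push_cast; ring
        have hsb : Real.sin b = 0 := by
          rw [hbval]
          have := Real.sin_nat_mul_pi (m + 1)
          push_cast at this
          exact this
        have hcb : |Real.cos b| = 1 := by
          rw [hbval]
          have := Real.abs_cos_int_mul_pi ((m : ℤ) + 1)
          push_cast at this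
          exact this
        have : |Real.sin (t - b)| = |Real.sin t| := by
          rw [Real.sin_sub, hsb, mul_zero, sub_zero, abs_mul, hcb, mul_one]
        rw [this]
        have hst : Real.sin t = -(t * Real.cos t) / β := by
          field_simp; linarith
        rw [hst, abs_div, abs_neg, abs_mul, abs_of_pos hβ, abs_of_pos ht0]
        have : |Real.cos t| ≤ 1 := Real.abs_cos_le_one _
        calc t * |Real.cos t| / β ≤ t * 1 / β := by gcongr
          _ = t / β := by ring
      · exfalso
        have h2' : β * Real.cos t ^ 2 = t * (Real.sin t * Real.cos t) := by
          linear_combination Real.cos t * h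
        nlinarith [mul_pos ht0 (neg_pos.mpr hsign), mul_nonneg hβ.le (sq_nonneg (Real.cos t))]
  -- convert to a bound on |t - b|
  have habs : |t - b| = b - t := by rw [abs_sub_comm, abs_of_pos (by linarith)]
  have hms : 2 / π * (b - t) ≤ Real.sin (b - t) :=
    Real.mul_le_sin (by linarith) htb2.le
  have hsin_eq : Real.sin (b - t) = |Real.sin (t - b)| := by
    have h0 : 0 ≤ Real.sin (b - t) :=
      Real.sin_nonneg_of_nonneg_of_le_pi (by linarith) (by linarith)
    rw [show t - b = -(b - t) by ring, Real.sin_neg, abs_neg, abs_of_nonneg h0]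
  have hmain : 2 / π * (b - t) ≤ t / β := by
    calc 2 / π * (b - t) ≤ Real.sin (b - t) := hms
      _ = |Real.sin (t - b)| := hsin_eq
      _ ≤ t / β := hkey
  have hπne : π ≠ 0 := ne_of_gt hπ
  have h1' : b - t ≤ π / 2 * (t / β) := by
    have h2' := mul_le_mul_of_nonneg_left hmain (by positivity : (0 : ℝ) ≤ π / 2)
    calc b - t = π / 2 * (2 / π * (b - t)) := by field_simp
      _ ≤ π / 2 * (t / β) := h2'
  rw [habs]
  calc b - t ≤ π / 2 * (t / β) := h1'
    _ ≤ π / 2 * (b / β) := by gcongr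
    _ = (π * b / 2) / β := by ring

/-- Dirichlet limit of the constant-pressure eigenvalue branch: if
S(β) ∈ (pπ/2, (p+1)π/2) solves the eigenvalue equation for every β > 0,
then S(β) → (p+1)π/2 as β → +∞. -/
theorem stmt_4 (p : ℕ) (S : ℝ → ℝ)
    (hS : ∀ β : ℝ, 0 < β →
      S β ∈ Set.Ioo ((p : ℝ) * π / 2) (((p : ℝ) + 1) * π / 2) ∧
      (β * Real.sin (S β) + S β * Real.cos (S β)) *
        (β * Real.cos (S β) - S β * Real.sin (S β)) = 0) :
    Tendsto S atTop (nhds (((p : ℝ) + 1) * π / 2)) := by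
  set b : ℝ := ((p : ℝ) + 1) * π / 2 with hb
  have h0 : Tendsto (fun β : ℝ => S β - b) atTop (nhds 0) := by
    refine squeeze_zero_norm' ?_
      (tendsto_const_nhds.div_atTop tendsto_id :
        Tendsto (fun β : ℝ => (π * b / 2) / β) atTop (nhds 0))
    filter_upwards [eventually_gt_atTop (0 : ℝ)] with β hβ
    obtain ⟨⟨h1, h2⟩, heq⟩ := hS β hβ
    simpa [Real.norm_eq_abs] using key_bound p β (S β) hβ h1 h2 heq
  have := h0.add_const b
  simpa using this
end

section
/- Let μ > 0, p ∈ ℕ and 0 < β₁ < β₂, and set I = (μ² + π²(1+p)²/4, μ² + π²(2+p)²/4). Suppose Λ₁, Λ₂ and Λ^D all lie in I, that for i = 1,2, writing sᵢ = √(Λᵢ − μ²), one has [βᵢ·sᵢ·sin sᵢ·cosh μ + (Λᵢ·cosh μ + βᵢ·μ·sinh μ)·cos sᵢ]·[βᵢ·sᵢ·cos sᵢ·sinh μ − (Λᵢ·sinh μ + βᵢ·μ·cosh μ)·sin sᵢ] = 0, and that, writing s^D = √(Λ^D − μ²), one has [s^D·sin s^D·cosh μ + μ·sinh μ·cos s^D]·[s^D·cos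 s^D·sinh μ − μ·cosh μ·sin s^D] = 0. Then Λ₁ < Λ₂ < Λ^D. -/
/-!
On the band `(1 + p) π / 2 < s < (2 + p) π / 2` the sign of `sin s * cos s` is `(-1) ^ (p + 1)`,
and this sign forces one factor of the characteristic product to be nonzero. With `s = √(Λ - μ²)`
and `t = 1 / β` (`t = 0` for Dirichlet) the eigenvalue equation becomes
`s tan s + μ tanh μ + Λ t = 0` for even `p` and `-s cot s + μ coth μ + Λ t = 0` for odd `p`.
In both cases it reads `h Λ + Λ t = c` with `h` monotone in `Λ`, so lowering `t` raises `Λ`.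
-/

open Real Set

lemma neg_one_pow_mul_sin_mul_cos_pos {p : ℕ} {x : ℝ}
    (hx : x ∈ Ioo ((1 + (p : ℝ)) * π / 2) ((2 + (p : ℝ)) * π / 2)) :
    0 < (-1) ^ (p + 1) * (sin x * cos x) := by
  have hsin : 0 < sin (2 * x - ((p + 1 : ℕ) : ℝ) * π) := by
    push_cast
    apply sin_pos_of_pos_of_lt_pi <;> nlinarith [hx.1, hx.2]
  rw [sin_sub_nat_mul_pi, sin_two_mul] at hsin
  linarith

lemma abs_sin_mul_cos_lt {x : ℝ} (hx : 0 < x) : |sin x * cos x| < x :=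
  calc |sin x * cos x| = |sin x| * |cos x| := abs_mul _ _
    _ ≤ |sin x| := mul_le_of_le_one_right (abs_nonneg _) (abs_cos_le_one x)
    _ < |x| := abs_sin_lt_abs hx.ne'
    _ = x := abs_of_pos hx

lemma strictMonoOn_mul_tan {a b : ℝ} (ha : 0 ≤ a) (hcos : ∀ x ∈ Ioo a b, cos x ≠ 0) :
    StrictMonoOn (fun x => x * tan x) (Ioo a b) := by
  have hderiv : ∀ x ∈ Ioo a b,
      HasDerivAt (fun x => x * tan x) (1 * tan x + x * (1 / cos x ^ 2)) x :=
    fun x hx => (hasDerivAt_id x).mul (hasDerivAt_tan (hcos x hx))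
  refine strictMonoOn_of_deriv_pos (convex_Ioo a b)
    (fun x hx => (hderiv x hx).continuousAt.continuousWithinAt) fun x hx => ?_
  rw [interior_Ioo] at hx
  have hc := hcos x hx
  have hbound := abs_lt.1 (abs_sin_mul_cos_lt (ha.trans_lt hx.1))
  rw [(hderiv x hx).deriv, tan_eq_sin_div_cos,
    show 1 * (sin x / cos x) + x * (1 / cos x ^ 2) = (sin x * cos x + x) / cos x ^ 2 by
      field_simp]
  exact div_pos (by linarith) (by positivity)

lemma strictMonoOn_neg_mul_cos_div_sin {a b : ℝ} (ha : 0 ≤ a)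
    (hsin : ∀ x ∈ Ioo a b, sin x ≠ 0) :
    StrictMonoOn (fun x => -(x * cos x / sin x)) (Ioo a b) := by
  have hderiv : ∀ x ∈ Ioo a b, HasDerivAt (fun x => -(x * cos x / sin x))
      (-(((1 * cos x + x * -sin x) * sin x - x * cos x * cos x) / sin x ^ 2)) x :=
    fun x hx => (((hasDerivAt_id x).mul (hasDerivAt_cos x)).div (hasDerivAt_sin x)
      (hsin x hx)).neg
  refine strictMonoOn_of_deriv_pos (convex_Ioo a b)
    (fun x hx => (hderiv x hx).continuousAt.continuousWithinAt) fun x hx => ?_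
  rw [interior_Ioo] at hx
  have hs := hsin x hx
  have hbound := abs_lt.1 (abs_sin_mul_cos_lt (ha.trans_lt hx.1))
  rw [(hderiv x hx).deriv,
    show -(((1 * cos x + x * -sin x) * sin x - x * cos x * cos x) / sin x ^ 2)
      = (x - sin x * cos x) / sin x ^ 2 by
      field_simp
      linear_combination x * sin_sq_add_cos_sq x]
  exact div_pos (by linarith) (by positivity)

/-- With `a = Λ / β` this is the denominator-cleared Navier characteristic product divided by
`β ^ 2`; the Dirichlet product is the case `a = 0`. -/
noncomputable def navierChar (μ a s : ℝ) : ℝ :=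
  (s * sin s * cosh μ + (a * cosh μ + μ * sinh μ) * cos s) *
    (s * cos s * sinh μ - (a * sinh μ + μ * cosh μ) * sin s)

lemma navierChar_mul_inv_eq_zero {μ β Λ s : ℝ} (hβ : β ≠ 0)
    (h : (β * s * sin s * cosh μ + (Λ * cosh μ + β * μ * sinh μ) * cos s) *
      (β * s * cos s * sinh μ - (Λ * sinh μ + β * μ * cosh μ) * sin s) = 0) :
    navierChar μ (Λ * β⁻¹) s = 0 := by
  have hscale : β ^ 2 * navierChar μ (Λ * β⁻¹) s =
      (β * s * sin s * cosh μ + (Λ * cosh μ + β * μ * sinh μ) * cos s) *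
        (β * s * cos s * sinh μ - (Λ * sinh μ + β * μ * cosh μ) * sin s) := by
    unfold navierChar
    field_simp
  rw [h] at hscale
  exact (mul_eq_zero.1 hscale).resolve_left (pow_ne_zero 2 hβ)

lemma navierChar_zero (μ s : ℝ) : navierChar μ 0 s =
    (s * sin s * cosh μ + μ * sinh μ * cos s) * (s * cos s * sinh μ - μ * cosh μ * sin s) := by
  unfold navierChar
  ring

lemma mul_tan_add_eq_of_navierChar_eq_zero {μ a s : ℝ} (hμ : 0 < μ) (hs : 0 < s) (ha : 0 ≤ a)
    (hsc : sin s * cos s < 0) (h : navierChar μ a s = 0) :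
    s * tan s + a = -(μ * sinh μ / cosh μ) := by
  have hsinh : 0 < sinh μ := sinh_pos_iff.2 hμ
  have hcosh : 0 < cosh μ := cosh_pos μ
  have hcos : cos s ≠ 0 := right_ne_zero_of_mul hsc.ne
  have hsin_mul : sin s * (s * cos s * sinh μ - (a * sinh μ + μ * cosh μ) * sin s) < 0 := by
    nlinarith [mul_pos hs hsinh, mul_nonneg (add_nonneg (mul_nonneg ha hsinh.le)
      (mul_pos hμ hcosh).le) (sq_nonneg (sin s))]
  have hfirst : s * sin s * cosh μ + (a * cosh μ + μ * sinh μ) * cos s = 0 :=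
    (mul_eq_zero.1 h).resolve_right (right_ne_zero_of_mul hsin_mul.ne)
  have hfactor : s * sin s * cosh μ + (a * cosh μ + μ * sinh μ) * cos s =
      cos s * cosh μ * (s * tan s + a + μ * sinh μ / cosh μ) := by
    rw [tan_eq_sin_div_cos]
    field_simp
    ring
  rw [hfactor] at hfirst
  linarith [(mul_eq_zero.1 hfirst).resolve_left (mul_ne_zero hcos hcosh.ne')]

lemma neg_mul_cos_div_sin_add_eq_of_navierChar_eq_zero {μ a s : ℝ} (hμ : 0 < μ) (hs : 0 < s)
    (ha : 0 ≤ a) (hsc : 0 < sin s * cos s) (h : navierChar μ a s = 0) :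
    -(s * cos s / sin s) + a = -(μ * cosh μ / sinh μ) := by
  have hsinh : 0 < sinh μ := sinh_pos_iff.2 hμ
  have hcosh : 0 < cosh μ := cosh_pos μ
  have hsin : sin s ≠ 0 := left_ne_zero_of_mul hsc.ne'
  have hcos_mul : 0 < cos s * (s * sin s * cosh μ + (a * cosh μ + μ * sinh μ) * cos s) := by
    nlinarith [mul_pos hs hcosh, mul_nonneg (add_nonneg (mul_nonneg ha hcosh.le)
      (mul_pos hμ hsinh).le) (sq_nonneg (cos s))]
  have hsecond : s * cos s * sinh μ - (a * sinh μ + μ * cosh μ) * sin s = 0 :=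
    (mul_eq_zero.1 h).resolve_left (right_ne_zero_of_mul hcos_mul.ne')
  have hfactor : s * cos s * sinh μ - (a * sinh μ + μ * cosh μ) * sin s =
      -(sin s * sinh μ) * (-(s * cos s / sin s) + a + μ * cosh μ / sinh μ) := by
    field_simp
    ring
  rw [hfactor] at hsecond
  linarith [(mul_eq_zero.1 hsecond).resolve_left (neg_ne_zero.2 (mul_ne_zero hsin hsinh.ne'))]

lemma exists_monotoneOn_navier_secular {μ : ℝ} (hμ : 0 < μ) (p : ℕ) :
    ∃ F : ℝ → ℝ, ∃ c : ℝ, MonotoneOn F (Ioo ((1 + (p : ℝ)) * π / 2) ((2 + (p : ℝ)) * π / 2)) ∧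
      ∀ s ∈ Ioo ((1 + (p : ℝ)) * π / 2) ((2 + (p : ℝ)) * π / 2), ∀ a, 0 ≤ a →
        navierChar μ a s = 0 → F s + a = c := by
  have hleft : 0 ≤ (1 + (p : ℝ)) * π / 2 := by positivity
  have hpos : ∀ s ∈ Ioo ((1 + (p : ℝ)) * π / 2) ((2 + (p : ℝ)) * π / 2), 0 < s := by
    intro s hs
    exact lt_of_le_of_lt hleft hs.1
  rcases Nat.even_or_odd p with hp | hp
  · have hsc : ∀ s ∈ Ioo ((1 + (p : ℝ)) * π / 2) ((2 + (p : ℝ)) * π / 2),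
        sin s * cos s < 0 := fun s hs => by
      simpa [hp.add_one.neg_one_pow] using neg_one_pow_mul_sin_mul_cos_pos hs
    exact ⟨fun s => s * tan s, _, (strictMonoOn_mul_tan hleft fun s hs =>
        right_ne_zero_of_mul (hsc s hs).ne).monotoneOn, fun s hs a ha h =>
      mul_tan_add_eq_of_navierChar_eq_zero hμ (hpos s hs) ha (hsc s hs) h⟩
  · have hsc : ∀ s ∈ Ioo ((1 + (p : ℝ)) * π / 2) ((2 + (p : ℝ)) * π / 2),
        0 < sin s * cos s := fun s hs => by
      simpa [hp.add_one.neg_one_pow] using neg_one_pow_mul_sin_mul_cos_pos hs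
    exact ⟨fun s => -(s * cos s / sin s), _, (strictMonoOn_neg_mul_cos_div_sin hleft fun s hs =>
        left_ne_zero_of_mul (hsc s hs).ne').monotoneOn, fun s hs a ha h =>
      neg_mul_cos_div_sin_add_eq_of_navierChar_eq_zero hμ (hpos s hs) ha (hsc s hs) h⟩

lemma sqrt_sub_sq_mem_Ioo {μ Λ a b : ℝ} (ha : 0 ≤ a) (hb : 0 ≤ b)
    (h : Λ ∈ Ioo (μ ^ 2 + a ^ 2) (μ ^ 2 + b ^ 2)) : √(Λ - μ ^ 2) ∈ Ioo a b := by
  constructor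
  · rw [lt_sqrt ha]
    linarith [h.1]
  · calc √(Λ - μ ^ 2) < √(b ^ 2) := sqrt_lt_sqrt (by nlinarith [h.1]) (by linarith [h.2])
      _ = b := sqrt_sq hb

lemma lt_of_monotoneOn_add_mul_eq {h : ℝ → ℝ} {S : Set ℝ} (hh : MonotoneOn h S)
    {Λ₁ Λ₂ t₁ t₂ : ℝ} (hΛ₁ : Λ₁ ∈ S) (hΛ₂ : Λ₂ ∈ S) (hpos : 0 < Λ₁) (ht₂ : 0 ≤ t₂)
    (ht : t₂ < t₁) (heq : h Λ₁ + Λ₁ * t₁ = h Λ₂ + Λ₂ * t₂) : Λ₁ < Λ₂ := by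
  by_contra! hle
  have hmono := hh hΛ₂ hΛ₁ hle
  nlinarith [mul_le_mul_of_nonneg_right hle ht₂, mul_lt_mul_of_pos_left ht hpos]

lemma exists_monotoneOn_navier_secular_eigenvalue {μ : ℝ} (hμ : 0 < μ) (p : ℕ) :
    ∃ h : ℝ → ℝ, ∃ c : ℝ,
      MonotoneOn h (Ioo (μ ^ 2 + π ^ 2 * (1 + (p : ℝ)) ^ 2 / 4)
        (μ ^ 2 + π ^ 2 * (2 + (p : ℝ)) ^ 2 / 4)) ∧
      ∀ Λ ∈ Ioo (μ ^ 2 + π ^ 2 * (1 + (p : ℝ)) ^ 2 / 4) (μ ^ 2 + π ^ 2 * (2 + (p : ℝ)) ^ 2 / 4),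
        ∀ t, 0 ≤ t → navierChar μ (Λ * t) √(Λ - μ ^ 2) = 0 → h Λ + Λ * t = c := by
  obtain ⟨F, c, hF, hroot⟩ := exists_monotoneOn_navier_secular hμ p
  have hband : Ioo (μ ^ 2 + π ^ 2 * (1 + (p : ℝ)) ^ 2 / 4) (μ ^ 2 + π ^ 2 * (2 + (p : ℝ)) ^ 2 / 4)
      = Ioo (μ ^ 2 + ((1 + (p : ℝ)) * π / 2) ^ 2) (μ ^ 2 + ((2 + (p : ℝ)) * π / 2) ^ 2) := by
    congr 1 <;> ring
  have hsqrt : MapsTo (fun Λ => √(Λ - μ ^ 2))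
      (Ioo (μ ^ 2 + ((1 + (p : ℝ)) * π / 2) ^ 2) (μ ^ 2 + ((2 + (p : ℝ)) * π / 2) ^ 2))
      (Ioo ((1 + (p : ℝ)) * π / 2) ((2 + (p : ℝ)) * π / 2)) :=
    fun Λ hΛ => sqrt_sub_sq_mem_Ioo (by positivity) (by positivity) hΛ
  rw [hband]
  refine ⟨fun Λ => F √(Λ - μ ^ 2), c,
    hF.comp (fun _ _ _ _ hle => sqrt_le_sqrt (by linarith)) hsqrt, fun Λ hΛ t ht => ?_⟩
  have hΛpos : 0 < Λ := lt_trans (by positivity) hΛ.1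
  exact hroot _ (hsqrt hΛ) _ (mul_nonneg hΛpos.le ht)

/-- Monotonicity in β and comparison with the Dirichlet eigenvalue for the
non-constant-pressure eigenvalue branch: Λ₁ < Λ₂ < Λ^D. -/
theorem stmt_5 (μ : ℝ) (hμ : 0 < μ) (p : ℕ) (β₁ β₂ Λ₁ Λ₂ ΛD : ℝ)
    (hβ₁ : 0 < β₁) (hβ : β₁ < β₂)
    (hΛ₁ : Λ₁ ∈ Set.Ioo (μ ^ 2 + π ^ 2 * (1 + (p : ℝ)) ^ 2 / 4)
      (μ ^ 2 + π ^ 2 * (2 + (p : ℝ)) ^ 2 / 4))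
    (hΛ₂ : Λ₂ ∈ Set.Ioo (μ ^ 2 + π ^ 2 * (1 + (p : ℝ)) ^ 2 / 4)
      (μ ^ 2 + π ^ 2 * (2 + (p : ℝ)) ^ 2 / 4))
    (hΛD : ΛD ∈ Set.Ioo (μ ^ 2 + π ^ 2 * (1 + (p : ℝ)) ^ 2 / 4)
      (μ ^ 2 + π ^ 2 * (2 + (p : ℝ)) ^ 2 / 4))
    (he₁ : (β₁ * Real.sqrt (Λ₁ - μ ^ 2) * Real.sin (Real.sqrt (Λ₁ - μ ^ 2)) * Real.cosh μ +
        (Λ₁ * Real.cosh μ + β₁ * μ * Real.sinh μ) * Real.cos (Real.sqrt (Λ₁ - μ ^ 2))) *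
      (β₁ * Real.sqrt (Λ₁ - μ ^ 2) * Real.cos (Real.sqrt (Λ₁ - μ ^ 2)) * Real.sinh μ -
        (Λ₁ * Real.sinh μ + β₁ * μ * Real.cosh μ) * Real.sin (Real.sqrt (Λ₁ - μ ^ 2))) = 0)
    (he₂ : (β₂ * Real.sqrt (Λ₂ - μ ^ 2) * Real.sin (Real.sqrt (Λ₂ - μ ^ 2)) * Real.cosh μ +
        (Λ₂ * Real.cosh μ + β₂ * μ * Real.sinh μ) * Real.cos (Real.sqrt (Λ₂ - μ ^ 2))) *
      (β₂ * Real.sqrt (Λ₂ - μ ^ 2) * Real.cos (Real.sqrt (Λ₂ - μ ^ 2)) * Real.sinh μ -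
        (Λ₂ * Real.sinh μ + β₂ * μ * Real.cosh μ) * Real.sin (Real.sqrt (Λ₂ - μ ^ 2))) = 0)
    (heD : (Real.sqrt (ΛD - μ ^ 2) * Real.sin (Real.sqrt (ΛD - μ ^ 2)) * Real.cosh μ +
        μ * Real.sinh μ * Real.cos (Real.sqrt (ΛD - μ ^ 2))) *
      (Real.sqrt (ΛD - μ ^ 2) * Real.cos (Real.sqrt (ΛD - μ ^ 2)) * Real.sinh μ -
        μ * Real.cosh μ * Real.sin (Real.sqrt (ΛD - μ ^ 2))) = 0) :
    Λ₁ < Λ₂ ∧ Λ₂ < ΛD := by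
  have hβ₂ : 0 < β₂ := hβ₁.trans hβ
  have hpos : ∀ Λ ∈ Ioo (μ ^ 2 + π ^ 2 * (1 + (p : ℝ)) ^ 2 / 4)
      (μ ^ 2 + π ^ 2 * (2 + (p : ℝ)) ^ 2 / 4), 0 < Λ :=
    fun Λ hΛ => lt_trans (by positivity) hΛ.1
  obtain ⟨h, c, hmono, hsecular⟩ := exists_monotoneOn_navier_secular_eigenvalue hμ p
  have e₁ := hsecular Λ₁ hΛ₁ _ (inv_nonneg.2 hβ₁.le) (navierChar_mul_inv_eq_zero hβ₁.ne' he₁)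
  have e₂ := hsecular Λ₂ hΛ₂ _ (inv_nonneg.2 hβ₂.le) (navierChar_mul_inv_eq_zero hβ₂.ne' he₂)
  have eD := hsecular ΛD hΛD 0 le_rfl (by rw [mul_zero, navierChar_zero]; exact heD)
  exact ⟨lt_of_monotoneOn_add_mul_eq hmono hΛ₁ hΛ₂ (hpos Λ₁ hΛ₁) (inv_nonneg.2 hβ₂.le)
      ((inv_lt_inv₀ hβ₂ hβ₁).2 hβ) (e₁.trans e₂.symm),
    lt_of_monotoneOn_add_mul_eq hmono hΛ₂ hΛD (hpos Λ₂ hΛ₂) le_rfl (inv_pos.2 hβ₂)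
      (e₂.trans eD.symm)⟩
end

section
/- Let μ > 0, p ∈ ℕ and set I = (μ² + π²(1+p)²/4, μ² + π²(2+p)²/4). Let Λ^D ∈ I satisfy, with s^D = √(Λ^D − μ²), [s^D·sin s^D·cosh μ + μ·sinh μ·cos s^D]·[s^D·cos s^D·sinh μ − μ·cosh μ·sin s^D] = 0. Let L : ℝ → ℝ be a function such that for every β > 0, L(β) ∈ I and, writing s(β) = √(L(β) − μ²), [β·s(β)·sin s(β)·cosh μ + (L(β)·cosh μ + β·μ·sinh μ)·cos s(β)]·[β·s(β)·cos s(β)·sinh μ − (L(β)·sinh μ + β·μ·cosh μ)·sin s(β)] = 0. Then L(β) tends to Λ^D as β → +∞. -/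
open Real Filter



/-- sin and cos are nonzero strictly between consecutive half-integer multiples of π. -/
lemma aux_ne_zero (j : ℤ) {s : ℝ} (h1 : (j:ℝ)*π/2 < s) (h2 : s < ((j:ℝ)+1)*π/2) :
    Real.sin s ≠ 0 ∧ Real.cos s ≠ 0 := by
  have hp := Real.pi_pos
  constructor
  · intro hs
    obtain ⟨n, hn⟩ := Real.sin_eq_zero_iff.mp hs
    rw [← hn] at h1 h2
    have e1 : (j:ℝ) < 2*n := by nlinarith
    have e2 : (2*(n:ℝ)) < j+1 := by nlinarith
    have f1 : (j:ℤ) < 2*n := by exact_mod_cast e1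
    have f2 : (2*n:ℤ) < j+1 := by exact_mod_cast e2
    omega
  · intro hs
    obtain ⟨n, hn⟩ := Real.cos_eq_zero_iff.mp hs
    rw [hn] at h1 h2
    have e1 : (j:ℝ) < 2*n+1 := by nlinarith
    have e2 : (2*(n:ℝ)+1) < j+1 := by nlinarith
    have f1 : (j:ℤ) < 2*n+1 := by exact_mod_cast e1
    have f2 : (2*n+1:ℤ) < j+1 := by exact_mod_cast e2
    omega

lemma sincos_pos (m : ℤ) {s : ℝ} (h1 : (m:ℝ)*π < s) (h2 : s < (m:ℝ)*π + π/2) :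
    0 < Real.sin s * Real.cos s := by
  have hp := Real.pi_pos
  have h : Real.sin (2*s) = Real.sin (2*s - m*(2*π)) := by
    rw [← Real.sin_add_int_mul_two_pi (2*s - m*(2*π)) m]; ring_nf
  have hpos : 0 < Real.sin (2*s - m*(2*π)) :=
    Real.sin_pos_of_pos_of_lt_pi (by nlinarith) (by nlinarith)
  nlinarith [Real.sin_two_mul s]

lemma sincos_neg (m : ℤ) {s : ℝ} (h1 : (m:ℝ)*π + π/2 < s) (h2 : s < ((m:ℝ)+1)*π) :
    Real.sin s * Real.cos s < 0 := by
  have hp := Real.pi_pos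
  have h : Real.sin (2*s) = Real.sin (2*s - (m+1)*(2*π)) := by
    rw [← Real.sin_add_int_mul_two_pi (2*s - (m+1)*(2*π)) (m+1)]; push_cast; ring_nf
  have hneg : Real.sin (2*s - ((m:ℝ)+1)*(2*π)) < 0 :=
    Real.sin_neg_of_neg_of_neg_pi_lt (by nlinarith) (by nlinarith)
  nlinarith [Real.sin_two_mul s]

lemma tanAux_strictMono {a b : ℝ} (ha : 1 ≤ a)
    (hcos : ∀ s ∈ Set.Ioo a b, Real.cos s ≠ 0) :
    StrictMonoOn (fun s => s * Real.sin s / Real.cos s) (Set.Ioo a b) := by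
  have hderiv : ∀ x ∈ Set.Ioo a b,
      HasDerivAt (fun s => s * Real.sin s / Real.cos s)
        (((1 * Real.sin x + x * Real.cos x) * Real.cos x -
          x * Real.sin x * (-Real.sin x)) / Real.cos x ^ 2) x := fun x hx =>
    ((hasDerivAt_id x).mul (Real.hasDerivAt_sin x)).div (Real.hasDerivAt_cos x) (hcos x hx)
  apply strictMonoOn_of_deriv_pos (convex_Ioo a b)
  · exact fun x hx => (hderiv x hx).continuousAt.continuousWithinAt
  · intro x hx
    rw [interior_Ioo] at hx
    rw [(hderiv x hx).deriv]
    have hc := hcos x hx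
    have hx1 : 1 < x := lt_of_le_of_lt ha hx.1
    have hc2 : 0 < Real.cos x ^ 2 := lt_of_le_of_ne (sq_nonneg _) (Ne.symm (pow_ne_zero 2 hc))
    have hpyth := Real.sin_sq_add_cos_sq x
    have hnum : 0 < (1 * Real.sin x + x * Real.cos x) * Real.cos x -
        x * Real.sin x * (-Real.sin x) := by
      nlinarith [Real.neg_one_le_sin x, Real.sin_le_one x, Real.neg_one_le_cos x,
        Real.cos_le_one x]
    exact div_pos hnum hc2

lemma cotAux_strictAnti {a b : ℝ} (ha : 1 ≤ a)
    (hsin : ∀ s ∈ Set.Ioo a b, Real.sin s ≠ 0) :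
    StrictAntiOn (fun s => s * Real.cos s / Real.sin s) (Set.Ioo a b) := by
  have hderiv : ∀ x ∈ Set.Ioo a b,
      HasDerivAt (fun s => s * Real.cos s / Real.sin s)
        (((1 * Real.cos x + x * (-Real.sin x)) * Real.sin x -
          x * Real.cos x * Real.cos x) / Real.sin x ^ 2) x := fun x hx =>
    ((hasDerivAt_id x).mul (Real.hasDerivAt_cos x)).div (Real.hasDerivAt_sin x) (hsin x hx)
  apply strictAntiOn_of_deriv_neg (convex_Ioo a b)
  · exact fun x hx => (hderiv x hx).continuousAt.continuousWithinAt
  · intro x hx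
    rw [interior_Ioo] at hx
    rw [(hderiv x hx).deriv]
    have hc := hsin x hx
    have hx1 : 1 < x := lt_of_le_of_lt ha hx.1
    have hc2 : 0 < Real.sin x ^ 2 := lt_of_le_of_ne (sq_nonneg _) (Ne.symm (pow_ne_zero 2 hc))
    have hpyth := Real.sin_sq_add_cos_sq x
    have hnum : (1 * Real.cos x + x * (-Real.sin x)) * Real.sin x -
        x * Real.cos x * Real.cos x < 0 := by
      nlinarith [Real.neg_one_le_sin x, Real.sin_le_one x, Real.neg_one_le_cos x,
        Real.cos_le_one x]
    exact div_neg_of_neg_of_pos hnum hc2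

noncomputable def F1 (μ s : ℝ) : ℝ :=
  s * Real.sin s * Real.cosh μ + μ * Real.sinh μ * Real.cos s

noncomputable def F2 (μ s : ℝ) : ℝ :=
  s * Real.cos s * Real.sinh μ - μ * Real.cosh μ * Real.sin s

lemma no_root_at_half {μ s : ℝ} (hμ : 0 < μ) (hs : 0 < s)
    (h : Real.sin s = 0 ∨ Real.cos s = 0) : F1 μ s * F2 μ s ≠ 0 := by
  have hsh : 0 < Real.sinh μ := Real.sinh_pos_iff.mpr hμ
  have hch : 0 < Real.cosh μ := Real.cosh_pos μ
  have hpyth := Real.sin_sq_add_cos_sq s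
  rcases h with h | h
  · have hc : Real.cos s ≠ 0 := by
      intro hc; rw [h, hc] at hpyth; norm_num at hpyth
    have hc2 : 0 < Real.cos s ^ 2 := lt_of_le_of_ne (sq_nonneg _) (Ne.symm (pow_ne_zero 2 hc))
    have key : F1 μ s * F2 μ s = μ * s * Real.sinh μ ^ 2 * Real.cos s ^ 2 := by
      simp only [F1, F2]; rw [h]; ring
    rw [key]
    positivity
  · have hc : Real.sin s ≠ 0 := by
      intro hc; rw [h, hc] at hpyth; norm_num at hpyth
    have hc2 : 0 < Real.sin s ^ 2 := lt_of_le_of_ne (sq_nonneg _) (Ne.symm (pow_ne_zero 2 hc))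
    have key : F1 μ s * F2 μ s = -(μ * s * Real.cosh μ ^ 2 * Real.sin s ^ 2) := by
      simp only [F1, F2]; rw [h]; ring
    rw [key]
    exact neg_ne_zero.mpr (ne_of_gt (mul_pos (mul_pos (mul_pos hμ hs) (pow_pos hch 2)) hc2))

lemma uniq_root (μ : ℝ) (hμ : 0 < μ) (k : ℕ) (hk : 1 ≤ k) {s1 s2 : ℝ}
    (hs1 : s1 ∈ Set.Ioo ((k:ℝ)*π/2) (((k:ℝ)+1)*π/2))
    (hs2 : s2 ∈ Set.Ioo ((k:ℝ)*π/2) (((k:ℝ)+1)*π/2))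
    (h1 : F1 μ s1 * F2 μ s1 = 0) (h2 : F1 μ s2 * F2 μ s2 = 0) : s1 = s2 := by
  have hp := Real.pi_pos
  have hp3 := Real.pi_gt_three
  have hsh : 0 < Real.sinh μ := Real.sinh_pos_iff.mpr hμ
  have hch : 0 < Real.cosh μ := Real.cosh_pos μ
  rcases Nat.even_or_odd k with ⟨m, hm⟩ | ⟨m, hm⟩
  · -- k = m + m even, interval (mπ, mπ + π/2), the F2-branch
    have hm1 : 1 ≤ m := by omega
    have hA : (k:ℝ)*π/2 = (m:ℝ)*π := by
      have h' : k = 2*m := by omega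
      rw [h']; push_cast; ring
    have hB : ((k:ℝ)+1)*π/2 = (m:ℝ)*π + π/2 := by
      have h' : k = 2*m := by omega
      rw [h']; push_cast; ring
    rw [hA, hB] at hs1 hs2
    have hma : (1:ℝ) ≤ (m:ℝ)*π := by
      have : (1:ℝ) ≤ (m:ℝ) := by exact_mod_cast hm1
      nlinarith
    have hne : ∀ s ∈ Set.Ioo ((m:ℝ)*π) ((m:ℝ)*π + π/2), Real.sin s ≠ 0 ∧ Real.cos s ≠ 0 := by
      intro s hs
      exact aux_ne_zero (2*m) (by push_cast; nlinarith [hs.1]) (by push_cast; nlinarith [hs.2])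
    have key : ∀ s ∈ Set.Ioo ((m:ℝ)*π) ((m:ℝ)*π + π/2), F1 μ s * F2 μ s = 0 →
        s * Real.cos s / Real.sin s = μ * Real.cosh μ / Real.sinh μ := by
      intro s hs hroot
      have hsc := sincos_pos m hs.1 hs.2
      have hsin := (hne s hs).1
      have hcos := (hne s hs).2
      have hspos : 0 < s := lt_of_le_of_lt (by positivity) hs.1
      have hF1 : F1 μ s ≠ 0 := by
        intro h0
        have : F1 μ s * Real.cos s = 0 := by rw [h0]; ring
        have hexp : s * (Real.sin s * Real.cos s) * Real.cosh μ
            + μ * Real.sinh μ * Real.cos s ^ 2 = 0 := by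
          simp only [F1] at this; linear_combination this
        have hc2 : 0 < Real.cos s ^ 2 :=
          lt_of_le_of_ne (sq_nonneg _) (Ne.symm (pow_ne_zero 2 hcos))
        nlinarith [mul_pos (mul_pos hspos hsc) hch, mul_pos (mul_pos hμ hsh) hc2]
      have hF2 : F2 μ s = 0 := by
        rcases mul_eq_zero.mp hroot with h | h
        · exact absurd h hF1
        · exact h
      simp only [F2] at hF2
      rw [div_eq_div_iff hsin (ne_of_gt hsh)]
      linear_combination hF2
    have hv1 := key s1 hs1 h1
    have hv2 := key s2 hs2 h2
    exact (cotAux_strictAnti hma (fun s hs => (hne s hs).1)).injOn hs1 hs2 (hv1.trans hv2.symm)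
  · -- k = 2m+1 odd, interval (mπ + π/2, (m+1)π), the F1-branch
    have hA : (k:ℝ)*π/2 = (m:ℝ)*π + π/2 := by
      have h' : k = 2*m+1 := by omega
      rw [h']; push_cast; ring
    have hB : ((k:ℝ)+1)*π/2 = ((m:ℝ)+1)*π := by
      have h' : k = 2*m+1 := by omega
      rw [h']; push_cast; ring
    rw [hA, hB] at hs1 hs2
    have hma : (1:ℝ) ≤ (m:ℝ)*π + π/2 := by
      have : (0:ℝ) ≤ (m:ℝ) := Nat.cast_nonneg m
      nlinarith
    have hne : ∀ s ∈ Set.Ioo ((m:ℝ)*π + π/2) (((m:ℝ)+1)*π), Real.sin s ≠ 0 ∧ Real.cos s ≠ 0 := by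
      intro s hs
      exact aux_ne_zero (2*m+1) (by push_cast; nlinarith [hs.1]) (by push_cast; nlinarith [hs.2])
    have key : ∀ s ∈ Set.Ioo ((m:ℝ)*π + π/2) (((m:ℝ)+1)*π), F1 μ s * F2 μ s = 0 →
        s * Real.sin s / Real.cos s = -(μ * Real.sinh μ / Real.cosh μ) := by
      intro s hs hroot
      have hsc := sincos_neg m hs.1 hs.2
      have hsin := (hne s hs).1
      have hcos := (hne s hs).2
      have hspos : 0 < s := by
        have : (0:ℝ) ≤ (m:ℝ) := Nat.cast_nonneg m
        nlinarith [hs.1]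
      have hF2 : F2 μ s ≠ 0 := by
        intro h0
        have : F2 μ s * Real.sin s = 0 := by rw [h0]; ring
        have hexp : s * (Real.sin s * Real.cos s) * Real.sinh μ
            - μ * Real.cosh μ * Real.sin s ^ 2 = 0 := by
          simp only [F2] at this; linear_combination this
        have hc2 : 0 < Real.sin s ^ 2 :=
          lt_of_le_of_ne (sq_nonneg _) (Ne.symm (pow_ne_zero 2 hsin))
        nlinarith [mul_neg_of_pos_of_neg (mul_pos hspos hsh) hsc, mul_pos (mul_pos hμ hch) hc2]
      have hF1 : F1 μ s = 0 := by
        rcases mul_eq_zero.mp hroot with h | h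
        · exact h
        · exact absurd h hF2
      simp only [F1] at hF1
      rw [← neg_div, div_eq_div_iff hcos (ne_of_gt hch)]
      linear_combination hF1
    have hv1 := key s1 hs1 h1
    have hv2 := key s2 hs2 h2
    exact (tanAux_strictMono hma (fun s hs => (hne s hs).2)).injOn hs1 hs2 (hv1.trans hv2.symm)

lemma sin_or_cos_zero (j : ℕ) :
    Real.sin ((j:ℝ)*π/2) = 0 ∨ Real.cos ((j:ℝ)*π/2) = 0 := by
  rcases Nat.even_or_odd j with ⟨m, hm⟩ | ⟨m, hm⟩
  · left
    have h : (j:ℝ)*π/2 = (m:ℝ)*π := by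
      have h' : j = 2*m := by omega
      rw [h']; push_cast; ring
    rw [h]; exact Real.sin_nat_mul_pi m
  · right
    have h' : j = 2*m+1 := by omega
    exact Real.cos_eq_zero_iff.mpr ⟨m, by rw [h']; push_cast; ring⟩

lemma sqrt_mem_Ioo (μ : ℝ) (hμ : 0 < μ) (p : ℕ) {Λ : ℝ}
    (hm : Λ ∈ Set.Icc (μ^2 + π^2*(1+(p:ℝ))^2/4) (μ^2 + π^2*(2+(p:ℝ))^2/4))
    (hroot : F1 μ (Real.sqrt (Λ - μ^2)) * F2 μ (Real.sqrt (Λ - μ^2)) = 0) :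
    Real.sqrt (Λ - μ^2) ∈ Set.Ioo ((((p:ℝ)+1))*π/2) ((((p:ℝ)+1)+1)*π/2) := by
  have hp := Real.pi_pos
  set s := Real.sqrt (Λ - μ^2) with hs
  have hge : π^2*(1+(p:ℝ))^2/4 ≤ Λ - μ^2 := by linarith [hm.1]
  have hle : Λ - μ^2 ≤ π^2*(2+(p:ℝ))^2/4 := by linarith [hm.2]
  have h0 : (0:ℝ) ≤ Λ - μ^2 := le_trans (by positivity) hge
  have hsa : ((p:ℝ)+1)*π/2 ≤ s := by
    rw [hs, Real.le_sqrt (by positivity) h0]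
    nlinarith
  have hsb : s ≤ (((p:ℝ)+1)+1)*π/2 := by
    have h1 : s ≤ Real.sqrt (π^2*(2+(p:ℝ))^2/4) := Real.sqrt_le_sqrt hle
    have e : Real.sqrt (π^2*(2+(p:ℝ))^2/4) = (((p:ℝ)+1)+1)*π/2 := by
      rw [show π^2*(2+(p:ℝ))^2/4 = ((((p:ℝ)+1)+1)*π/2)^2 by ring,
        Real.sqrt_sq (by positivity)]
    rw [e] at h1; exact h1
  have hsa0 : (0:ℝ) < ((p:ℝ)+1)*π/2 := by positivity
  constructor
  · rcases lt_or_eq_of_le hsa with h | h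
    · exact h
    · exfalso
      have hform : s = (((p+1:ℕ)):ℝ)*π/2 := by rw [← h]; push_cast; ring
      refine no_root_at_half hμ (lt_of_lt_of_le hsa0 hsa) ?_ hroot
      rw [hform]; exact sin_or_cos_zero (p+1)
  · rcases lt_or_eq_of_le hsb with h | h
    · exact h
    · exfalso
      have hform : s = (((p+2:ℕ)):ℝ)*π/2 := by rw [h]; push_cast; ring
      refine no_root_at_half hμ (lt_of_lt_of_le hsa0 hsa) ?_ hroot
      rw [hform]; exact sin_or_cos_zero (p+2)

lemma uniq_lambda (μ : ℝ) (hμ : 0 < μ) (p : ℕ) {Λ1 Λ2 : ℝ}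
    (h1m : Λ1 ∈ Set.Icc (μ^2 + π^2*(1+(p:ℝ))^2/4) (μ^2 + π^2*(2+(p:ℝ))^2/4))
    (h2m : Λ2 ∈ Set.Icc (μ^2 + π^2*(1+(p:ℝ))^2/4) (μ^2 + π^2*(2+(p:ℝ))^2/4))
    (h1 : F1 μ (Real.sqrt (Λ1 - μ^2)) * F2 μ (Real.sqrt (Λ1 - μ^2)) = 0)
    (h2 : F1 μ (Real.sqrt (Λ2 - μ^2)) * F2 μ (Real.sqrt (Λ2 - μ^2)) = 0) :
    Λ1 = Λ2 := by
  have hp := Real.pi_pos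
  have hmem1 := sqrt_mem_Ioo μ hμ p h1m h1
  have hmem2 := sqrt_mem_Ioo μ hμ p h2m h2
  have hcast : (((p+1:ℕ)):ℝ) = (p:ℝ)+1 := by push_cast; ring
  have hseq : Real.sqrt (Λ1 - μ^2) = Real.sqrt (Λ2 - μ^2) := by
    apply uniq_root μ hμ (p+1) (by omega)
    · rw [hcast]; exact hmem1
    · rw [hcast]; exact hmem2
    · exact h1
    · exact h2
  have h01 : (0:ℝ) ≤ Λ1 - μ^2 := by nlinarith [h1m.1, sq_nonneg ((1+(p:ℝ))*π)]
  have h02 : (0:ℝ) ≤ Λ2 - μ^2 := by nlinarith [h2m.1, sq_nonneg ((1+(p:ℝ))*π)]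
  have := congrArg (fun x => x^2) hseq
  simp only [Real.sq_sqrt h01, Real.sq_sqrt h02] at this
  linarith

lemma F_bound (μ : ℝ) (hμ : 0 < μ) {s B : ℝ} (hs0 : 0 ≤ s) (hsB : s ≤ B) :
    |F1 μ s| ≤ (B + μ) * Real.cosh μ ∧ |F2 μ s| ≤ (B + μ) * Real.cosh μ := by
  have hch := Real.cosh_pos μ
  have hsh : 0 < Real.sinh μ := Real.sinh_pos_iff.mpr hμ
  have hshc : Real.sinh μ ≤ Real.cosh μ := (Real.sinh_lt_cosh μ).le
  have h1 : |Real.sin s| ≤ 1 := abs_le.mpr ⟨Real.neg_one_le_sin s, Real.sin_le_one s⟩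
  have h2 : |Real.cos s| ≤ 1 := abs_le.mpr ⟨Real.neg_one_le_cos s, Real.cos_le_one s⟩
  have ha1 := abs_nonneg (Real.sin s)
  have ha2 := abs_nonneg (Real.cos s)
  have t1 : s * |Real.sin s| * Real.cosh μ ≤ B * 1 * Real.cosh μ := by
    have hB : (0:ℝ) ≤ B := le_trans hs0 hsB
    gcongr <;> first | assumption | positivity
  have t2 : μ * Real.sinh μ * |Real.cos s| ≤ μ * Real.cosh μ * 1 := by
    have hB : (0:ℝ) ≤ B := le_trans hs0 hsB
    gcongr <;> first | assumption | positivity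
  have t3 : s * |Real.cos s| * Real.sinh μ ≤ B * 1 * Real.cosh μ := by
    have hB : (0:ℝ) ≤ B := le_trans hs0 hsB
    gcongr <;> first | assumption | positivity
  have t4 : μ * Real.cosh μ * |Real.sin s| ≤ μ * Real.cosh μ * 1 := by
    have hB : (0:ℝ) ≤ B := le_trans hs0 hsB
    gcongr <;> first | assumption | positivity
  constructor
  · simp only [F1]
    calc |s * Real.sin s * Real.cosh μ + μ * Real.sinh μ * Real.cos s|
        ≤ |s * Real.sin s * Real.cosh μ| + |μ * Real.sinh μ * Real.cos s| := abs_add_le _ _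
      _ = s * |Real.sin s| * Real.cosh μ + μ * Real.sinh μ * |Real.cos s| := by
          rw [abs_mul, abs_mul, abs_mul, abs_mul, abs_of_nonneg hs0,
            abs_of_nonneg hch.le, abs_of_nonneg hμ.le, abs_of_nonneg hsh.le]
      _ ≤ (B + μ) * Real.cosh μ := by nlinarith
  · simp only [F2]
    calc |s * Real.cos s * Real.sinh μ - μ * Real.cosh μ * Real.sin s|
        ≤ |s * Real.cos s * Real.sinh μ| + |μ * Real.cosh μ * Real.sin s| := abs_sub _ _
      _ = s * |Real.cos s| * Real.sinh μ + μ * Real.cosh μ * |Real.sin s| := by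
          rw [abs_mul, abs_mul, abs_mul, abs_mul, abs_of_nonneg hs0,
            abs_of_nonneg hch.le, abs_of_nonneg hμ.le, abs_of_nonneg hsh.le]
      _ ≤ (B + μ) * Real.cosh μ := by nlinarith


/-- Convergence of the non-constant-pressure eigenvalue branch L(β) to the
Dirichlet eigenvalue Λ^D as β → +∞. -/
theorem stmt_6 (μ : ℝ) (hμ : 0 < μ) (p : ℕ) (ΛD : ℝ)
    (hΛD : ΛD ∈ Set.Ioo (μ ^ 2 + π ^ 2 * (1 + (p : ℝ)) ^ 2 / 4)
      (μ ^ 2 + π ^ 2 * (2 + (p : ℝ)) ^ 2 / 4))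
    (heD : (Real.sqrt (ΛD - μ ^ 2) * Real.sin (Real.sqrt (ΛD - μ ^ 2)) * Real.cosh μ +
        μ * Real.sinh μ * Real.cos (Real.sqrt (ΛD - μ ^ 2))) *
      (Real.sqrt (ΛD - μ ^ 2) * Real.cos (Real.sqrt (ΛD - μ ^ 2)) * Real.sinh μ -
        μ * Real.cosh μ * Real.sin (Real.sqrt (ΛD - μ ^ 2))) = 0)
    (L : ℝ → ℝ)
    (hL : ∀ β : ℝ, 0 < β →
      L β ∈ Set.Ioo (μ ^ 2 + π ^ 2 * (1 + (p : ℝ)) ^ 2 / 4)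
        (μ ^ 2 + π ^ 2 * (2 + (p : ℝ)) ^ 2 / 4) ∧
      (β * Real.sqrt (L β - μ ^ 2) * Real.sin (Real.sqrt (L β - μ ^ 2)) * Real.cosh μ +
          (L β * Real.cosh μ + β * μ * Real.sinh μ) * Real.cos (Real.sqrt (L β - μ ^ 2))) *
        (β * Real.sqrt (L β - μ ^ 2) * Real.cos (Real.sqrt (L β - μ ^ 2)) * Real.sinh μ -
          (L β * Real.sinh μ + β * μ * Real.cosh μ) * Real.sin (Real.sqrt (L β - μ ^ 2))) = 0) :
    Tendsto L atTop (nhds ΛD) := by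
  have hp := Real.pi_pos
  have hch := Real.cosh_pos μ
  have hsh : 0 < Real.sinh μ := Real.sinh_pos_iff.mpr hμ
  have hshc : Real.sinh μ ≤ Real.cosh μ := (Real.sinh_lt_cosh μ).le
  set a := μ ^ 2 + π ^ 2 * (1 + (p:ℝ)) ^ 2 / 4 with ha
  set b := μ ^ 2 + π ^ 2 * (2 + (p:ℝ)) ^ 2 / 4 with hb
  have ha0 : (0:ℝ) < a := by rw [ha]; positivity
  have hb0 : (0:ℝ) < b := by rw [hb]; positivity
  set G : ℝ → ℝ := fun Λ => F1 μ (Real.sqrt (Λ - μ^2)) * F2 μ (Real.sqrt (Λ - μ^2)) with hG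
  have hGcont : Continuous G := by
    rw [hG]; simp only [F1, F2]; fun_prop
  have hΛDicc : ΛD ∈ Set.Icc a b := Set.Ioo_subset_Icc_self hΛD
  have heD' : G ΛD = 0 := by rw [hG]; simp only [F1, F2]; exact heD
  have huniq : ∀ Λ ∈ Set.Icc a b, G Λ = 0 → Λ = ΛD := by
    intro Λ hm h
    rw [hG] at h
    simp only at h
    exact uniq_lambda μ hμ p (by rw [ha, hb] at hm; exact hm) (by rw [ha, hb] at hΛDicc; exact hΛDicc) h (by rw [hG] at heD'; exact heD')
  set M := ((2+(p:ℝ))*π/2 + μ) * Real.cosh μ with hM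
  have hM0 : (0:ℝ) < M := by rw [hM]; positivity
  set C := b * Real.cosh μ * M with hC
  have hC0 : (0:ℝ) < C := by rw [hC]; positivity
  have hsbound : ∀ Λ ∈ Set.Icc a b,
      Real.sqrt (Λ - μ^2) ≤ (2+(p:ℝ))*π/2 := by
    intro Λ hm
    have hle : Λ - μ^2 ≤ ((2+(p:ℝ))*π/2)^2 := by
      have := hm.2; rw [hb] at this; nlinarith
    calc Real.sqrt (Λ - μ^2) ≤ Real.sqrt (((2+(p:ℝ))*π/2)^2) := Real.sqrt_le_sqrt hle
      _ = (2+(p:ℝ))*π/2 := Real.sqrt_sq (by positivity)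
  have hkey : ∀ β : ℝ, 1 ≤ β → |G (L β)| ≤ C / β := by
    intro β hβ
    have hβ0 : (0:ℝ) < β := lt_of_lt_of_le one_pos hβ
    obtain ⟨hmem, heq⟩ := hL β hβ0
    have hmic : L β ∈ Set.Icc a b := Set.Ioo_subset_Icc_self hmem
    set s := Real.sqrt (L β - μ^2) with hsdef
    have hs0 : (0:ℝ) ≤ s := Real.sqrt_nonneg _
    have hsB : s ≤ (2+(p:ℝ))*π/2 := hsbound (L β) hmic
    obtain ⟨hb1, hb2⟩ := F_bound μ hμ hs0 hsB
    have hLb : |L β| ≤ b := by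
      rw [abs_of_pos (lt_of_lt_of_le ha0 hmic.1)]
      exact hmic.2
    have hsin1 : |Real.sin s| ≤ 1 := abs_le.mpr ⟨Real.neg_one_le_sin s, Real.sin_le_one s⟩
    have hcos1 : |Real.cos s| ≤ 1 := abs_le.mpr ⟨Real.neg_one_le_cos s, Real.cos_le_one s⟩
    have hGabs : |G (L β)| = |F1 μ s| * |F2 μ s| := by
      rw [hG]; exact abs_mul _ _
    rcases mul_eq_zero.mp heq with h | h
    · have hg1 : β * F1 μ s = -(L β * Real.cosh μ * Real.cos s) := by
        simp only [F1]; linear_combination h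
      have habs : |F1 μ s| * β ≤ b * Real.cosh μ := by
        calc |F1 μ s| * β = |β * F1 μ s| := by
              rw [abs_mul, abs_of_pos hβ0]; ring
          _ = |L β| * Real.cosh μ * |Real.cos s| := by
              rw [hg1, abs_neg, abs_mul, abs_mul, abs_of_pos hch]
          _ ≤ b * Real.cosh μ * 1 := by
              gcongr <;> first | assumption | exact hb0.le | positivity
          _ = b * Real.cosh μ := by ring
      have h1 : |F1 μ s| ≤ b * Real.cosh μ / β := by
        rw [le_div_iff₀ hβ0]; exact habs
      rw [hGabs]
      calc |F1 μ s| * |F2 μ s| ≤ (b * Real.cosh μ / β) * (((2+(p:ℝ))*π/2 + μ) * Real.cosh μ) :=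
            mul_le_mul h1 hb2 (abs_nonneg _) (by positivity)
        _ = C / β := by rw [hC, hM]; ring
    · have hg2 : β * F2 μ s = L β * Real.sinh μ * Real.sin s := by
        simp only [F2]; linear_combination h
      have habs : |F2 μ s| * β ≤ b * Real.cosh μ := by
        calc |F2 μ s| * β = |β * F2 μ s| := by
              rw [abs_mul, abs_of_pos hβ0]; ring
          _ = |L β| * Real.sinh μ * |Real.sin s| := by
              rw [hg2, abs_mul, abs_mul, abs_of_pos hsh]
          _ ≤ b * Real.cosh μ * 1 := by
              gcongr <;> first | assumption | exact hb0.le | positivity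
          _ = b * Real.cosh μ := by ring
      have h2 : |F2 μ s| ≤ b * Real.cosh μ / β := by
        rw [le_div_iff₀ hβ0]; exact habs
      rw [hGabs]
      calc |F1 μ s| * |F2 μ s| ≤ (((2+(p:ℝ))*π/2 + μ) * Real.cosh μ) * (b * Real.cosh μ / β) :=
            mul_le_mul hb1 h2 (abs_nonneg _) (by positivity)
        _ = C / β := by rw [hC, hM]; ring
  rw [Metric.tendsto_atTop]
  intro ε hε
  by_cases hne : ((Set.Icc a b) ∩ {Λ | ε ≤ |Λ - ΛD|}).Nonempty
  · have hKcomp : IsCompact ((Set.Icc a b) ∩ {Λ | ε ≤ |Λ - ΛD|}) :=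
      isCompact_Icc.inter_right
        (isClosed_le continuous_const ((continuous_id.sub continuous_const).abs))
    obtain ⟨x0, hx0K, hx0min⟩ := hKcomp.exists_isMinOn hne hGcont.abs.continuousOn
    have hx0ne : x0 ≠ ΛD := by
      intro h
      have h2 := hx0K.2
      rw [h] at h2
      simp only [Set.mem_setOf_eq, sub_self, abs_zero] at h2
      linarith
    have hδ : 0 < |G x0| := abs_pos.mpr (fun h0 => hx0ne (huniq x0 hx0K.1 h0))
    refine ⟨max 1 (C/|G x0| + 1), fun β hβ => ?_⟩
    have hβ1 : 1 ≤ β := le_trans (le_max_left _ _) hβ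
    have hβ0 : (0:ℝ) < β := lt_of_lt_of_le one_pos hβ1
    have hβC : C/|G x0| + 1 ≤ β := le_trans (le_max_right _ _) hβ
    have hlt : |G (L β)| < |G x0| := by
      have h1 := hkey β hβ1
      have h2 : C / β < |G x0| := by
        rw [div_lt_iff₀ hβ0]
        have h3 : C / |G x0| < β := by linarith
        calc C = |G x0| * (C/|G x0|) := by field_simp
          _ < |G x0| * β := mul_lt_mul_of_pos_left h3 hδ
      linarith
    have hmic : L β ∈ Set.Icc a b := Set.Ioo_subset_Icc_self (hL β hβ0).1
    rw [Real.dist_eq]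
    by_contra hcon
    push_neg at hcon
    exact absurd (hx0min ⟨hmic, hcon⟩) (not_le.mpr hlt)
  · refine ⟨1, fun β hβ => ?_⟩
    have hβ0 : (0:ℝ) < β := lt_of_lt_of_le one_pos hβ
    have hmic : L β ∈ Set.Icc a b := Set.Ioo_subset_Icc_self (hL β hβ0).1
    rw [Real.dist_eq]
    by_contra hcon
    push_neg at hcon
    exact hne ⟨L β, hmic, hcon⟩
end

section
/- Let β > 0, μ > 0 and λ ∈ (0, μ²), and set t = √(μ² − λ). Then sinh μ · (λ·sinh t − β·t·cosh t) + β·μ·cosh μ·sinh t > 0. -/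
/-!
Write `t = √(μ² - λ) ∈ (0, μ)`. The claim follows from `λ sinh μ sinh t > 0` together with
`t cosh t sinh μ ≤ μ cosh μ sinh t`, i.e. the monotonicity of `x ↦ x coth x` on `(0, ∞)`.
The latter is the inequality `a sinh b ≤ b sinh a` for `0 ≤ b ≤ a` (convexity of `sinh` on
`[0, ∞)`, where it vanishes at `0`) applied to `a = μ + t`, `b = μ - t`, after expanding
with the addition formulas.
-/

open Real Set

theorem convexOn_sinh_Ici : ConvexOn ℝ (Ici 0) sinh := by
  refine convexOn_of_deriv2_nonneg (convex_Ici 0) continuous_sinh.continuousOn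
    differentiable_sinh.differentiableOn ?_ fun x hx => ?_
  · rw [Real.deriv_sinh]
    exact differentiable_cosh.differentiableOn
  · rw [interior_Ici] at hx
    simp only [Function.iterate_succ, Function.iterate_zero, Function.comp_apply, id,
      Real.deriv_sinh, Real.deriv_cosh]
    exact (sinh_pos_iff.2 hx).le

theorem ConvexOn.mul_le_mul_of_map_zero {f : ℝ → ℝ} (hf : ConvexOn ℝ (Ici 0) f) (h0 : f 0 = 0)
    {a b : ℝ} (hb : 0 ≤ b) (hba : b ≤ a) : a * f b ≤ b * f a := by
  rcases hb.eq_or_lt with rfl | hb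
  · simp [h0]
  have ha : 0 < a := hb.trans_le hba
  have hslope := hf.secant_mono (a := 0) self_mem_Ici hb.le ha.le hb.ne' ha.ne' hba
  simp only [h0, sub_zero] at hslope
  rw [div_le_div_iff₀ hb ha] at hslope
  linarith

theorem mul_sinh_le_mul_sinh {a b : ℝ} (hb : 0 ≤ b) (hba : b ≤ a) : a * sinh b ≤ b * sinh a :=
  convexOn_sinh_Ici.mul_le_mul_of_map_zero sinh_zero hb hba

theorem mul_cosh_mul_sinh_le {t μ : ℝ} (ht : 0 ≤ t) (htμ : t ≤ μ) :
    t * cosh t * sinh μ ≤ μ * cosh μ * sinh t := by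
  have h := mul_sinh_le_mul_sinh (a := μ + t) (b := μ - t) (by linarith) (by linarith)
  rw [sinh_add, sinh_sub] at h
  linarith

/-- Strict positivity of sinh μ·(λ sinh t − β t cosh t) + β μ cosh μ sinh t
on 0 < λ < μ², where t = √(μ² − λ). -/
theorem stmt_9 (β μ lam : ℝ) (hβ : 0 < β) (hμ : 0 < μ)
    (hlam : lam ∈ Set.Ioo (0 : ℝ) (μ ^ 2)) :
    0 < Real.sinh μ * (lam * Real.sinh (Real.sqrt (μ ^ 2 - lam))
        - β * Real.sqrt (μ ^ 2 - lam) * Real.cosh (Real.sqrt (μ ^ 2 - lam)))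
      + β * μ * Real.cosh μ * Real.sinh (Real.sqrt (μ ^ 2 - lam)) := by
  obtain ⟨hlam0, hlamμ⟩ := hlam
  set t := √(μ ^ 2 - lam)
  have ht : 0 < t := sqrt_pos.2 (by linarith)
  have htμ : t < μ := by
    rw [sqrt_lt' hμ]
    linarith
  have hmain : 0 < lam * sinh μ * sinh t :=
    mul_pos (mul_pos hlam0 (sinh_pos_iff.2 hμ)) (sinh_pos_iff.2 ht)
  have hcoth := mul_le_mul_of_nonneg_left (mul_cosh_mul_sinh_le ht.le htμ.le) hβ.le
  linarith
end

section
/- For all real μ > 0 and β > 0 one has (μ² − β)·sinh μ + β·μ·cosh μ > 0 (and consequently [μ·cosh μ + β·sinh μ]·[(μ² − β)·sinh μ + β·μ·cosh μ] > 0). -/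
open Real

lemma sinh_lt_mul_cosh {μ : ℝ} (hμ : 0 < μ) : Real.sinh μ < μ * Real.cosh μ := by
  have h : StrictMonoOn (fun x : ℝ => x * Real.cosh x - Real.sinh x) (Set.Ici 0) := by
    apply strictMonoOn_of_deriv_pos (convex_Ici 0)
    · fun_prop
    · intro x hx
      rw [interior_Ici] at hx
      have : deriv (fun x : ℝ => x * Real.cosh x - Real.sinh x) x = x * Real.sinh x := by
        simp [mul_comm]
      rw [this]
      exact mul_pos hx (Real.sinh_pos_iff.2 hx)
  have := h (Set.self_mem_Ici) (Set.mem_Ici.2 hμ.le) hμ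
  simpa using this

/-- For μ > 0, β > 0: (μ² − β) sinh μ + β μ cosh μ > 0, and consequently
[μ cosh μ + β sinh μ]·[(μ² − β) sinh μ + β μ cosh μ] > 0. -/
theorem stmt_10 (μ β : ℝ) (hμ : 0 < μ) (hβ : 0 < β) :
    0 < (μ ^ 2 - β) * Real.sinh μ + β * μ * Real.cosh μ ∧
    0 < (μ * Real.cosh μ + β * Real.sinh μ) *
      ((μ ^ 2 - β) * Real.sinh μ + β * μ * Real.cosh μ) := by
  have hs : 0 < Real.sinh μ := Real.sinh_pos_iff.2 hμ
  have hc : 0 < Real.cosh μ := Real.cosh_pos μ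
  have hlt := sinh_lt_mul_cosh hμ
  have h1 : 0 < (μ ^ 2 - β) * Real.sinh μ + β * μ * Real.cosh μ := by nlinarith
  exact ⟨h1, mul_pos (by positivity) h1⟩
end

section
/- Let v = (v₁, v₂, v₃) : ℝ³ → ℝ³ be a continuously differentiable vector field such that its symmetric gradient vanishes identically, i.e. ∂_i v_j + ∂_j v_i = 0 everywhere for all i, j ∈ {1,2,3}; suppose v is 2π-periodic in its first two variables, and v₃(x, y, 1) = 0 for all x, y. Then there exist constants A, B ∈ ℝ such that v(x, y, z) = (A, B, 0) for all (x, y, z). If moreover v₁(x₀, y₀, 1) = v₂(x₀, y₀, 1) = 0 for some point (x₀, y₀), then v ≡ 0. -/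
open Real

/-- Standard basis directions of ℝ × ℝ × ℝ. -/
noncomputable def basis3 : Fin 3 → ℝ × ℝ × ℝ
  | 0 => (1, 0, 0)
  | 1 => (0, 1, 0)
  | 2 => (0, 0, 1)

/-- Partial derivative ∂ⱼ f of a scalar function on ℝ³. -/
noncomputable def pd (f : ℝ × ℝ × ℝ → ℝ) (j : Fin 3) (p : ℝ × ℝ × ℝ) : ℝ :=
  fderiv ℝ f p (basis3 j)

/-!
Indices are those of `Fin 3`, so `e₂` is the vertical direction. Vanishing of `∂ᵢvᵢ` makes `vᵢ`
invariant under translation along `eᵢ`; with the boundary condition this kills `v₂`, and then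
`∂₂vᵢ = -∂ᵢv₂ = 0`. What remains is `∂₁v₀ = -∂₀v₁`: the left side is invariant along `e₀, e₂`
and the right side along `e₁, e₂`, so both are a constant `c`. Then `v₀` grows like `c y`, and
periodicity in `y` forces `c = 0`: every partial derivative vanishes and `v` is constant.
-/

open Function

section Translation

variable {E F : Type*} [NormedAddCommGroup E] [NormedSpace ℝ E]
  [NormedAddCommGroup F] [NormedSpace ℝ F]

lemma hasDerivAt_comp_add_smul {f : E → F} {p : E} (e : E) {t : ℝ}
    (hf : DifferentiableAt ℝ f (p + t • e)) :
    HasDerivAt (fun s : ℝ => f (p + s • e)) (fderiv ℝ f (p + t • e) e) t := by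
  have hline : HasDerivAt (fun s : ℝ => p + s • e) e t := by
    simpa using ((hasDerivAt_id t).smul_const e).const_add p
  exact hf.hasFDerivAt.comp_hasDerivAt t hline

lemma apply_add_smul_of_fderiv_apply_eq {f : E → F} (hf : Differentiable ℝ f) {e : E} {c : F}
    (h : ∀ q, fderiv ℝ f q e = c) (p : E) (t : ℝ) : f (p + t • e) = f p + t • c := by
  have hd : ∀ s : ℝ, HasDerivAt (fun s : ℝ => f (p + s • e) - s • c) 0 s := fun s =>
    ((hasDerivAt_comp_add_smul e (hf _)).sub ((hasDerivAt_id' s).smul_const c)).congr_deriv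
      (by simp [h])
  have := is_const_of_deriv_eq_zero (fun s => (hd s).differentiableAt) (fun s => (hd s).deriv) t 0
  simpa [sub_eq_iff_eq_add] using this

lemma periodic_of_fderiv_apply_eq_zero {f : E → F} (hf : Differentiable ℝ f) {e : E}
    (h : ∀ q, fderiv ℝ f q e = 0) (t : ℝ) : Periodic f (t • e) := fun p => by
  simpa using apply_add_smul_of_fderiv_apply_eq hf h p t

lemma eq_zero_of_fderiv_apply_eq_of_periodic {f : E → F} (hf : Differentiable ℝ f) {e : E}
    {c : F} (h : ∀ q, fderiv ℝ f q e = c) {T : ℝ} (hT : T ≠ 0) (hper : Periodic f (T • e)) :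
    c = 0 := by
  have := apply_add_smul_of_fderiv_apply_eq hf h 0 T
  rw [hper 0, left_eq_add, smul_eq_zero] at this
  exact this.resolve_left hT

lemma Function.Periodic.fderiv {f : E → F} {a : E} (h : Periodic f a) :
    Periodic (fderiv ℝ f) a := fun x => by
  rw [← fderiv_comp_add_right, h.funext]

end Translation

section Coordinates

lemma Function.Periodic.pd {f : ℝ × ℝ × ℝ → ℝ} {a : ℝ × ℝ × ℝ} (h : Periodic f a) (j : Fin 3) :
    Periodic (pd f j) a := fun x =>
  congrArg (· (basis3 j)) (h.fderiv x)

lemma periodic_of_pd_eq_zero {f : ℝ × ℝ × ℝ → ℝ} (hf : Differentiable ℝ f) {j : Fin 3}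
    (h : ∀ p, pd f j p = 0) (t : ℝ) : Periodic f (t • basis3 j) :=
  periodic_of_fderiv_apply_eq_zero hf h t

lemma eq_of_periodic_basis3 {F : Type*} {f : ℝ × ℝ × ℝ → F}
    (h : ∀ (j : Fin 3) (t : ℝ), Periodic f (t • basis3 j)) (p : ℝ × ℝ × ℝ) : f p = f 0 := by
  obtain ⟨x, y, z⟩ := p
  have hp : ((x, y, z) : ℝ × ℝ × ℝ) = 0 + x • basis3 0 + y • basis3 1 + z • basis3 2 := by
    simp [basis3]
  rw [hp, h, h, h]

end Coordinates

section Strain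

def HasZeroStrain (v : Fin 3 → ℝ × ℝ × ℝ → ℝ) : Prop :=
  ∀ (i j : Fin 3) (p : ℝ × ℝ × ℝ), pd (v j) i p + pd (v i) j p = 0

variable {v : Fin 3 → ℝ × ℝ × ℝ → ℝ}

lemma pd_self_eq_zero (hsym : HasZeroStrain v) (i : Fin 3) (p : ℝ × ℝ × ℝ) :
    pd (v i) i p = 0 := by
  linarith [hsym i i p]

lemma vertical_eq_zero_of_boundary (hD : ∀ i, Differentiable ℝ (v i)) (hsym : HasZeroStrain v)
    (hbc : ∀ x y : ℝ, v 2 (x, y, 1) = 0) : v 2 = 0 := by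
  ext ⟨x, y, z⟩
  have hp : ((x, y, 1) : ℝ × ℝ × ℝ) = (x, y, z) + (1 - z) • basis3 2 := by
    simp [basis3]
  rw [Pi.zero_apply, ← hbc, hp, periodic_of_pd_eq_zero (hD 2) (pd_self_eq_zero hsym 2)]

lemma pd_vertical_eq_zero (hsym : HasZeroStrain v) (hv2 : v 2 = 0) (i : Fin 3)
    (p : ℝ × ℝ × ℝ) : pd (v i) 2 p = 0 := by
  simpa [hv2, pd] using hsym 2 i p

lemma pd_shear_const (hD : ∀ i, Differentiable ℝ (v i)) (hsym : HasZeroStrain v) (hv2 : v 2 = 0)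
    (p : ℝ × ℝ × ℝ) : pd (v 0) 1 p = pd (v 0) 1 0 := by
  refine eq_of_periodic_basis3 (fun j t => ?_) p
  fin_cases j
  · exact (periodic_of_pd_eq_zero (hD 0) (pd_self_eq_zero hsym 0) t).pd 1
  · have hanti : ∀ q, pd (v 0) 1 q = -pd (v 1) 0 q := fun q => by linarith [hsym 1 0 q]
    intro q
    rw [hanti, hanti]
    exact congrArg Neg.neg ((periodic_of_pd_eq_zero (hD 1) (pd_self_eq_zero hsym 1) t).pd 0 q)
  · exact (periodic_of_pd_eq_zero (hD 0) (pd_vertical_eq_zero hsym hv2 0) t).pd 1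

lemma pd_eq_zero_of_shear_eq_zero (hsym : HasZeroStrain v) (hv2 : v 2 = 0)
    (hshear : ∀ p, pd (v 0) 1 p = 0) (i j : Fin 3) (p : ℝ × ℝ × ℝ) : pd (v i) j p = 0 := by
  have hpd2 : ∀ j p, pd (v 2) j p = 0 := fun j p => by simp [hv2, pd]
  fin_cases i <;> fin_cases j <;>
    simp [pd_self_eq_zero hsym, pd_vertical_eq_zero hsym hv2, hshear, hpd2]
  linarith [hsym 1 0 p, hshear p]

end Strain

theorem stmt_13_general (v : Fin 3 → ℝ × ℝ × ℝ → ℝ)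
    (hC1 : ∀ i, ContDiff ℝ 1 (v i))
    (hsym : ∀ (i j : Fin 3) (p : ℝ × ℝ × ℝ), pd (v j) i p + pd (v i) j p = 0)
    (hpery : ∀ i (x y z : ℝ), v i (x, y + 2 * π, z) = v i (x, y, z))
    (hbc : ∀ x y : ℝ, v 2 (x, y, 1) = 0) :
    (∃ A B : ℝ, ∀ p : ℝ × ℝ × ℝ, v 0 p = A ∧ v 1 p = B ∧ v 2 p = 0) ∧
    ((∃ x₀ y₀ : ℝ, v 0 (x₀, y₀, 1) = 0 ∧ v 1 (x₀, y₀, 1) = 0) →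
      ∀ (i : Fin 3) (p : ℝ × ℝ × ℝ), v i p = 0) := by
  have hD : ∀ i, Differentiable ℝ (v i) := fun i => (hC1 i).differentiable one_ne_zero
  have hv2 : v 2 = 0 := vertical_eq_zero_of_boundary hD hsym hbc
  have hshear : ∀ p, pd (v 0) 1 p = 0 := by
    have hper : Periodic (v 0) ((2 * π) • basis3 1) := fun ⟨x, y, z⟩ => by
      simpa [basis3] using hpery 0 x y z
    have hc := eq_zero_of_fderiv_apply_eq_of_periodic (hD 0) (pd_shear_const hD hsym hv2)
      (by positivity) hper
    exact fun p => (pd_shear_const hD hsym hv2 p).trans hc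
  have hconst : ∀ i p, v i p = v i 0 := fun i => eq_of_periodic_basis3 fun j =>
    periodic_of_pd_eq_zero (hD i) (pd_eq_zero_of_shear_eq_zero hsym hv2 hshear i j)
  refine ⟨⟨v 0 0, v 1 0, fun p => ⟨hconst 0 p, hconst 1 p, congrFun hv2 p⟩⟩, ?_⟩
  rintro ⟨x₀, y₀, h0, h1⟩ i p
  rw [hconst i p, ← hconst i (x₀, y₀, 1)]
  fin_cases i
  exacts [h0, h1, congrFun hv2 _]

/-- A C¹ field with vanishing strain tensor, doubly 2π-periodic in (x,y) and with
third component vanishing at z = 1, is a constant horizontal field (A, B, 0);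
if moreover its first two components vanish at some boundary point, it is zero. -/
theorem stmt_13 (v : Fin 3 → ℝ × ℝ × ℝ → ℝ)
    (hC1 : ∀ i, ContDiff ℝ 1 (v i))
    (hsym : ∀ (i j : Fin 3) (p : ℝ × ℝ × ℝ), pd (v j) i p + pd (v i) j p = 0)
    (hperx : ∀ i (x y z : ℝ), v i (x + 2 * π, y, z) = v i (x, y, z))
    (hpery : ∀ i (x y z : ℝ), v i (x, y + 2 * π, z) = v i (x, y, z))
    (hbc : ∀ x y : ℝ, v 2 (x, y, 1) = 0) :
    (∃ A B : ℝ, ∀ p : ℝ × ℝ × ℝ, v 0 p = A ∧ v 1 p = B ∧ v 2 p = 0) ∧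
    ((∃ x₀ y₀ : ℝ, v 0 (x₀, y₀, 1) = 0 ∧ v 1 (x₀, y₀, 1) = 0) →
      ∀ (i : Fin 3) (p : ℝ × ℝ × ℝ), v i p = 0) :=
  stmt_13_general v hC1 hsym hpery hbc
end

section
/- Let β > 0, m ∈ ℕ, n ∈ ℕ with n ≥ 1, and a, b, c, d ∈ ℝ. Set μ² = m² + n², let γ > 0, and let Z : ℝ → ℝ be either Z(z) = cos(γz) with β·cos γ = γ·sin γ, or Z(z) = sin(γz) with β·sin γ = −γ·cos γ. Set λ = μ² + γ² and define u = (u₁, u₂, u₃) : ℝ³ → ℝ³ by u₁(x,y,z) = Z(z)·P^u_{m,n}(x,y), u₂(x,y,z) = −(m/n)·Z(z)·P^v_{m,n}(x,y), u₃ = 0. Then for all (x,y,z): (i) ∂ₓu₁ + ∂_yu₂ + ∂_zu₃ = 0; (ii) Δu_j = −λ·u_j for j = 1,2,3 (componentwise Laplacian in (x,y,z)); (iii) ∂_zu_j(x,y,1) + β·u_j(x,y,1) = 0 and −∂_zu_j(x,y,−1) + β·u_j(x,y,−1) = 0 for j = 1,2. -/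
open Real

/-- The periodic profile 𝒫ᵘ_{m,n}. -/
noncomputable def Pu (m n : ℕ) (a b c d : ℝ) (x y : ℝ) : ℝ :=
  a * Real.cos (m * x) * Real.sin (n * y) - b * Real.sin (m * x) * Real.sin (n * y)
    - c * Real.sin (m * x) * Real.cos (n * y) + d * Real.cos (m * x) * Real.cos (n * y)

/-- The periodic profile 𝒫ᵛ_{m,n}. -/
noncomputable def Pv (m n : ℕ) (a b c d : ℝ) (x y : ℝ) : ℝ :=
  a * Real.sin (m * x) * Real.cos (n * y) + b * Real.cos (m * x) * Real.cos (n * y)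
    - c * Real.cos (m * x) * Real.sin (n * y) - d * Real.sin (m * x) * Real.sin (n * y)

/-! Each of `Pu`, `Pv`, `Z` is, in every single variable, of the form `A cos (k t) + B sin (k t)`,
hence an eigenfunction of `d²/dt²` with eigenvalue `-k²`. Since `u₁, u₂` are products
`Z(z) P(x, y)`, their Laplacian is `-(m² + n² + γ²) u`, and the Robin conditions on `u` reduce
to those on `Z`. The divergence vanishes because `n ∂ₓ𝒫ᵘ = m ∂_y𝒫ᵛ`. -/

noncomputable def sinusoid (A B k t : ℝ) : ℝ := A * cos (k * t) + B * sin (k * t)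

section Sinusoid

variable (A B k : ℝ)

theorem hasDerivAt_sinusoid (t : ℝ) :
    HasDerivAt (sinusoid A B k) (sinusoid (B * k) (-(A * k)) k t) t := by
  have hk : HasDerivAt (fun s : ℝ => k * s) k t := by
    simpa using (hasDerivAt_id t).const_mul k
  have := ((hk.cos).const_mul A).add ((hk.sin).const_mul B)
  exact this.congr_deriv (by simp only [sinusoid]; ring)

theorem deriv_sinusoid : deriv (sinusoid A B k) = sinusoid (B * k) (-(A * k)) k :=
  funext fun t => (hasDerivAt_sinusoid A B k t).deriv

theorem deriv_deriv_sinusoid (t : ℝ) :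
    deriv (deriv (sinusoid A B k)) t = -k ^ 2 * sinusoid A B k t := by
  rw [deriv_sinusoid, deriv_sinusoid]
  simp only [sinusoid]
  ring

end Sinusoid

section Profiles

variable (m n : ℕ) (a b c d : ℝ)

theorem Pu_eq_sinusoid_left (y : ℝ) :
    (fun x => Pu m n a b c d x y) =
      sinusoid (a * sin (n * y) + d * cos (n * y)) (-(b * sin (n * y)) - c * cos (n * y)) m := by
  funext x
  simp only [Pu, sinusoid]
  ring

theorem Pu_eq_sinusoid_right (x : ℝ) :
    (fun y => Pu m n a b c d x y) =
      sinusoid (d * cos (m * x) - c * sin (m * x)) (a * cos (m * x) - b * sin (m * x)) n := by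
  funext y
  simp only [Pu, sinusoid]
  ring

theorem Pv_eq_sinusoid_left (y : ℝ) :
    (fun x => Pv m n a b c d x y) =
      sinusoid (b * cos (n * y) - c * sin (n * y)) (a * cos (n * y) - d * sin (n * y)) m := by
  funext x
  simp only [Pv, sinusoid]
  ring

theorem Pv_eq_sinusoid_right (x : ℝ) :
    (fun y => Pv m n a b c d x y) =
      sinusoid (a * sin (m * x) + b * cos (m * x)) (-(c * cos (m * x)) - d * sin (m * x)) n := by
  funext y
  simp only [Pv, sinusoid]
  ring

theorem deriv_deriv_Pu_left (x y : ℝ) :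
    deriv (deriv fun x => Pu m n a b c d x y) x = -(m : ℝ) ^ 2 * Pu m n a b c d x y := by
  rw [Pu_eq_sinusoid_left, deriv_deriv_sinusoid, ← Pu_eq_sinusoid_left]

theorem deriv_deriv_Pu_right (x y : ℝ) :
    deriv (deriv fun y => Pu m n a b c d x y) y = -(n : ℝ) ^ 2 * Pu m n a b c d x y := by
  rw [Pu_eq_sinusoid_right, deriv_deriv_sinusoid, ← Pu_eq_sinusoid_right]

theorem deriv_deriv_Pv_left (x y : ℝ) :
    deriv (deriv fun x => Pv m n a b c d x y) x = -(m : ℝ) ^ 2 * Pv m n a b c d x y := by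
  rw [Pv_eq_sinusoid_left, deriv_deriv_sinusoid, ← Pv_eq_sinusoid_left]

theorem deriv_deriv_Pv_right (x y : ℝ) :
    deriv (deriv fun y => Pv m n a b c d x y) y = -(n : ℝ) ^ 2 * Pv m n a b c d x y := by
  rw [Pv_eq_sinusoid_right, deriv_deriv_sinusoid, ← Pv_eq_sinusoid_right]

theorem natCast_mul_deriv_Pu_left (x y : ℝ) :
    (n : ℝ) * deriv (fun x => Pu m n a b c d x y) x =
      m * deriv (fun y => Pv m n a b c d x y) y := by
  rw [Pu_eq_sinusoid_left, Pv_eq_sinusoid_right, deriv_sinusoid, deriv_sinusoid]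
  simp only [sinusoid]
  ring

end Profiles

/-- Navier slip with friction at `z = ±1`, for a single horizontal velocity component. -/
def IsRobinProfile (β : ℝ) (Z : ℝ → ℝ) : Prop :=
  deriv Z 1 + β * Z 1 = 0 ∧ -deriv Z (-1) + β * Z (-1) = 0

theorem cos_mul_eq_sinusoid (γ : ℝ) : (fun z => cos (γ * z)) = sinusoid 1 0 γ := by
  funext z
  simp [sinusoid]

theorem sin_mul_eq_sinusoid (γ : ℝ) : (fun z => sin (γ * z)) = sinusoid 0 1 γ := by
  funext z
  simp [sinusoid]

theorem isRobinProfile_cos {β γ : ℝ} (h : β * cos γ = γ * sin γ) :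
    IsRobinProfile β fun z => cos (γ * z) := by
  simp only [IsRobinProfile, cos_mul_eq_sinusoid, deriv_sinusoid, sinusoid, mul_one, mul_neg_one,
    cos_neg, sin_neg]
  constructor <;> linear_combination h

theorem isRobinProfile_sin {β γ : ℝ} (h : β * sin γ = -(γ * cos γ)) :
    IsRobinProfile β fun z => sin (γ * z) := by
  simp only [IsRobinProfile, sin_mul_eq_sinusoid, deriv_sinusoid, sinusoid, mul_one, mul_neg_one,
    cos_neg, sin_neg]
  constructor
  · linear_combination h
  · linear_combination -h

section Separated

variable {Z : ℝ → ℝ} {P : ℝ → ℝ → ℝ} {u : ℝ → ℝ → ℝ → ℝ}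

theorem laplacian_of_separated {κ μ ν : ℝ} (hu : ∀ x y z, u x y z = Z z * P x y)
    (hZ : ∀ z, deriv (deriv Z) z = -κ * Z z)
    (hPx : ∀ x y, deriv (deriv fun x => P x y) x = -μ * P x y)
    (hPy : ∀ x y, deriv (deriv fun y => P x y) y = -ν * P x y) (x y z : ℝ) :
    deriv (deriv (fun x' => u x' y z)) x + deriv (deriv (fun y' => u x y' z)) y
      + deriv (deriv (fun z' => u x y z')) z = -(μ + ν + κ) * u x y z := by
  simp only [hu, deriv_const_mul_field', deriv_mul_const_field', hZ, hPx, hPy]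
  ring

theorem robin_of_separated {β : ℝ} (hu : ∀ x y z, u x y z = Z z * P x y)
    (hZ : IsRobinProfile β Z) (x y : ℝ) :
    IsRobinProfile β fun z => u x y z := by
  simp only [IsRobinProfile, hu, deriv_mul_const_field']
  constructor
  · linear_combination P x y * hZ.1
  · linear_combination P x y * hZ.2

end Separated

theorem stmt_14_general (β : ℝ) (m n : ℕ) (hn : 1 ≤ n) (a b c d : ℝ)
    (γ : ℝ) (Z : ℝ → ℝ)
    (hZ : ((Z = fun z => Real.cos (γ * z)) ∧ β * Real.cos γ = γ * Real.sin γ) ∨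
          ((Z = fun z => Real.sin (γ * z)) ∧ β * Real.sin γ = -(γ * Real.cos γ)))
    (lam : ℝ) (hlam : lam = ((m : ℝ) ^ 2 + (n : ℝ) ^ 2) + γ ^ 2)
    (u₁ u₂ u₃ : ℝ → ℝ → ℝ → ℝ)
    (hu₁ : ∀ x y z, u₁ x y z = Z z * Pu m n a b c d x y)
    (hu₂ : ∀ x y z, u₂ x y z = -((m : ℝ) / (n : ℝ)) * Z z * Pv m n a b c d x y)
    (hu₃ : ∀ x y z, u₃ x y z = 0) :
    (∀ x y z : ℝ,
      deriv (fun x' => u₁ x' y z) x + deriv (fun y' => u₂ x y' z) y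
        + deriv (fun z' => u₃ x y z') z = 0) ∧
    (∀ x y z : ℝ,
      (deriv (deriv (fun x' => u₁ x' y z)) x + deriv (deriv (fun y' => u₁ x y' z)) y
        + deriv (deriv (fun z' => u₁ x y z')) z = -lam * u₁ x y z) ∧
      (deriv (deriv (fun x' => u₂ x' y z)) x + deriv (deriv (fun y' => u₂ x y' z)) y
        + deriv (deriv (fun z' => u₂ x y z')) z = -lam * u₂ x y z) ∧
      (deriv (deriv (fun x' => u₃ x' y z)) x + deriv (deriv (fun y' => u₃ x y' z)) y
        + deriv (deriv (fun z' => u₃ x y z')) z = -lam * u₃ x y z)) ∧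
    (∀ x y : ℝ,
      (deriv (fun z => u₁ x y z) 1 + β * u₁ x y 1 = 0) ∧
      (deriv (fun z => u₂ x y z) 1 + β * u₂ x y 1 = 0) ∧
      (-deriv (fun z => u₁ x y z) (-1) + β * u₁ x y (-1) = 0) ∧
      (-deriv (fun z => u₂ x y z) (-1) + β * u₂ x y (-1) = 0)) := by
  have hZ' : (∀ z, deriv (deriv Z) z = -γ ^ 2 * Z z) ∧ IsRobinProfile β Z := by
    rcases hZ with ⟨rfl, h⟩ | ⟨rfl, h⟩
    · refine ⟨fun z => ?_, isRobinProfile_cos h⟩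
      rw [cos_mul_eq_sinusoid, deriv_deriv_sinusoid]
    · refine ⟨fun z => ?_, isRobinProfile_sin h⟩
      rw [sin_mul_eq_sinusoid, deriv_deriv_sinusoid]
  have hu₂' : ∀ x y z, u₂ x y z = Z z * (-((m : ℝ) / n) * Pv m n a b c d x y) := by
    intro x y z
    rw [hu₂]
    ring
  have hn' : (n : ℝ) ≠ 0 := Nat.cast_ne_zero.mpr (by omega)
  refine ⟨fun x y z => ?_, fun x y z => ⟨?_, ?_, ?_⟩, fun x y => ?_⟩
  · simp only [hu₁, hu₂, hu₃, deriv_const_mul_field', deriv_const]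
    field_simp
    linear_combination Z z * natCast_mul_deriv_Pu_left m n a b c d x y
  · rw [laplacian_of_separated hu₁ hZ'.1 (deriv_deriv_Pu_left m n a b c d)
      (deriv_deriv_Pu_right m n a b c d), hlam]
  · have hPx x y : deriv (deriv fun x => -((m : ℝ) / n) * Pv m n a b c d x y) x
        = -(m : ℝ) ^ 2 * (-((m : ℝ) / n) * Pv m n a b c d x y) := by
      simp only [deriv_const_mul_field', deriv_deriv_Pv_left]
      ring
    have hPy x y : deriv (deriv fun y => -((m : ℝ) / n) * Pv m n a b c d x y) y
        = -(n : ℝ) ^ 2 * (-((m : ℝ) / n) * Pv m n a b c d x y) := by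
      simp only [deriv_const_mul_field', deriv_deriv_Pv_right]
      ring
    rw [laplacian_of_separated hu₂' hZ'.1 hPx hPy, hlam]
  · simp [hu₃]
  · obtain ⟨h₁, h₁'⟩ := robin_of_separated hu₁ hZ'.2 x y
    obtain ⟨h₂, h₂'⟩ := robin_of_separated hu₂' hZ'.2 x y
    exact ⟨h₁, h₂, h₁', h₂'⟩

/-- The constant-pressure fields u = (Z(z)𝒫ᵘ, −(m/n)Z(z)𝒫ᵛ, 0) are divergence-free
eigenfunctions of the Stokes operator with eigenvalue λ = μ² + γ², satisfying the
Navier slip-with-friction boundary conditions at z = ±1. -/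
theorem stmt_14 (β : ℝ) (hβ : 0 < β) (m n : ℕ) (hn : 1 ≤ n) (a b c d : ℝ)
    (γ : ℝ) (hγ : 0 < γ) (Z : ℝ → ℝ)
    (hZ : ((Z = fun z => Real.cos (γ * z)) ∧ β * Real.cos γ = γ * Real.sin γ) ∨
          ((Z = fun z => Real.sin (γ * z)) ∧ β * Real.sin γ = -(γ * Real.cos γ)))
    (lam : ℝ) (hlam : lam = ((m : ℝ) ^ 2 + (n : ℝ) ^ 2) + γ ^ 2)
    (u₁ u₂ u₃ : ℝ → ℝ → ℝ → ℝ)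
    (hu₁ : ∀ x y z, u₁ x y z = Z z * Pu m n a b c d x y)
    (hu₂ : ∀ x y z, u₂ x y z = -((m : ℝ) / (n : ℝ)) * Z z * Pv m n a b c d x y)
    (hu₃ : ∀ x y z, u₃ x y z = 0) :
    (∀ x y z : ℝ,
      deriv (fun x' => u₁ x' y z) x + deriv (fun y' => u₂ x y' z) y
        + deriv (fun z' => u₃ x y z') z = 0) ∧
    (∀ x y z : ℝ,
      (deriv (deriv (fun x' => u₁ x' y z)) x + deriv (deriv (fun y' => u₁ x y' z)) y
        + deriv (deriv (fun z' => u₁ x y z')) z = -lam * u₁ x y z) ∧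
      (deriv (deriv (fun x' => u₂ x' y z)) x + deriv (deriv (fun y' => u₂ x y' z)) y
        + deriv (deriv (fun z' => u₂ x y z')) z = -lam * u₂ x y z) ∧
      (deriv (deriv (fun x' => u₃ x' y z)) x + deriv (deriv (fun y' => u₃ x y' z)) y
        + deriv (deriv (fun z' => u₃ x y z')) z = -lam * u₃ x y z)) ∧
    (∀ x y : ℝ,
      (deriv (fun z => u₁ x y z) 1 + β * u₁ x y 1 = 0) ∧
      (deriv (fun z => u₂ x y z) 1 + β * u₂ x y 1 = 0) ∧
      (-deriv (fun z => u₁ x y z) (-1) + β * u₁ x y (-1) = 0) ∧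
      (-deriv (fun z => u₂ x y z) (-1) + β * u₂ x y (-1) = 0)) :=
  stmt_14_general β m n hn a b c d γ Z hZ lam hlam u₁ u₂ u₃ hu₁ hu₂ hu₃
end

section
/- Let m ∈ ℕ, n ∈ ℕ with n ≥ 1, a, b, c, d ∈ ℝ, and let Z : ℝ → ℝ be differentiable. Define u = (u₁, u₂, u₃) : ℝ³ → ℝ³ by u₁(x,y,z) = Z(z)·P^u_{m,n}(x,y), u₂(x,y,z) = −(m/n)·Z(z)·P^v_{m,n}(x,y), u₃ = 0. Then for all (x,y,z), the convective term (u·∇)u, whose i-th component is Σ_j u_j ∂_j u_i, equals −(m/2)·Z(z)² · ( 2(ab+cd)·cos(2mx) + (a²−b²−c²+d²)·sin(2mx) , (m/n)·[2(bc+ad)·cos(2ny) + (a²+b²−c²−d²)·sin(2ny)] , 0 ). -/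
open Real

lemma combo_deriv (A B k x : ℝ) :
    deriv (fun t : ℝ => A * Real.cos (k * t) + B * Real.sin (k * t)) x
      = k * (B * Real.cos (k * x) - A * Real.sin (k * x)) := by
  have hk : HasDerivAt (fun t : ℝ => k * t) k x := by
    simpa using (hasDerivAt_id x).const_mul k
  have h : HasDerivAt (fun t : ℝ => A * Real.cos (k * t) + B * Real.sin (k * t))
      (A * (-Real.sin (k * x) * k) + B * (Real.cos (k * x) * k)) x :=
    (((Real.hasDerivAt_cos (k * x)).comp x hk).const_mul A).add
      (((Real.hasDerivAt_sin (k * x)).comp x hk).const_mul B)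
  rw [h.deriv]; ring


/-- Explicit formula for the convective term (u·∇)u of the constant-pressure
Stokes eigenfunction u = (Z(z)𝒫ᵘ, −(m/n)Z(z)𝒫ᵛ, 0). -/
theorem stmt_15 (m n : ℕ) (hn : 1 ≤ n) (a b c d : ℝ)
    (Z : ℝ → ℝ) (hZ : Differentiable ℝ Z)
    (u₁ u₂ u₃ : ℝ → ℝ → ℝ → ℝ)
    (hu₁ : ∀ x y z, u₁ x y z = Z z * Pu m n a b c d x y)
    (hu₂ : ∀ x y z, u₂ x y z = -((m : ℝ) / (n : ℝ)) * Z z * Pv m n a b c d x y)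
    (hu₃ : ∀ x y z, u₃ x y z = 0) :
    ∀ x y z : ℝ,
      (u₁ x y z * deriv (fun x' => u₁ x' y z) x + u₂ x y z * deriv (fun y' => u₁ x y' z) y
          + u₃ x y z * deriv (fun z' => u₁ x y z') z
        = -((m : ℝ) / 2) * (Z z) ^ 2 *
            (2 * (a * b + c * d) * Real.cos (2 * m * x)
              + (a ^ 2 - b ^ 2 - c ^ 2 + d ^ 2) * Real.sin (2 * m * x))) ∧
      (u₁ x y z * deriv (fun x' => u₂ x' y z) x + u₂ x y z * deriv (fun y' => u₂ x y' z) y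
          + u₃ x y z * deriv (fun z' => u₂ x y z') z
        = -((m : ℝ) / 2) * (Z z) ^ 2 *
            ((m : ℝ) / (n : ℝ) *
              (2 * (b * c + a * d) * Real.cos (2 * n * y)
                + (a ^ 2 + b ^ 2 - c ^ 2 - d ^ 2) * Real.sin (2 * n * y)))) ∧
      (u₁ x y z * deriv (fun x' => u₃ x' y z) x + u₂ x y z * deriv (fun y' => u₃ x y' z) y
          + u₃ x y z * deriv (fun z' => u₃ x y z') z = 0) := by
  intro x y z
  have hn0 : (n : ℝ) ≠ 0 := Nat.cast_ne_zero.mpr (by omega)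
  have hpy := Real.sin_sq_add_cos_sq ((n : ℝ) * y)
  have hpx := Real.sin_sq_add_cos_sq ((m : ℝ) * x)
  have h2m : (2 : ℝ) * m * x = 2 * ((m : ℝ) * x) := by ring
  have h2n : (2 : ℝ) * n * y = 2 * ((n : ℝ) * y) := by ring
  have e11 : (fun x' => u₁ x' y z)
      = fun x' => (Z z * (a * Real.sin (n * y) + d * Real.cos (n * y))) * Real.cos ((m : ℝ) * x')
          + (Z z * (-(b * Real.sin (n * y)) - c * Real.cos (n * y))) * Real.sin ((m : ℝ) * x') := by
    funext t; rw [hu₁]; unfold Pu; ring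
  have e12 : (fun y' => u₁ x y' z)
      = fun y' => (Z z * (d * Real.cos (m * x) - c * Real.sin (m * x))) * Real.cos ((n : ℝ) * y')
          + (Z z * (a * Real.cos (m * x) - b * Real.sin (m * x))) * Real.sin ((n : ℝ) * y') := by
    funext t; rw [hu₁]; unfold Pu; ring
  have e21 : (fun x' => u₂ x' y z)
      = fun x' => (-((m : ℝ) / n) * Z z * (b * Real.cos (n * y) - c * Real.sin (n * y))) * Real.cos ((m : ℝ) * x')
          + (-((m : ℝ) / n) * Z z * (a * Real.cos (n * y) - d * Real.sin (n * y))) * Real.sin ((m : ℝ) * x') := by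
    funext t; rw [hu₂]; unfold Pv; ring
  have e22 : (fun y' => u₂ x y' z)
      = fun y' => (-((m : ℝ) / n) * Z z * (a * Real.sin (m * x) + b * Real.cos (m * x))) * Real.cos ((n : ℝ) * y')
          + (-((m : ℝ) / n) * Z z * (-(c * Real.cos (m * x)) - d * Real.sin (m * x))) * Real.sin ((n : ℝ) * y') := by
    funext t; rw [hu₂]; unfold Pv; ring
  refine ⟨?_, ?_, ?_⟩
  · rw [e11, e12, combo_deriv, combo_deriv, hu₁, hu₂, hu₃, h2m,
      Real.sin_two_mul, Real.cos_two_mul]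
    unfold Pu Pv
    field_simp
    ring_nf
    simp only [Real.cos_sq']
    ring
  · rw [e21, e22, combo_deriv, combo_deriv, hu₁, hu₂, hu₃, h2n,
      Real.sin_two_mul, Real.cos_two_mul]
    unfold Pu Pv
    field_simp
    ring_nf
    simp only [Real.cos_sq']
    ring
  · have e3 : ∀ f : ℝ → ℝ, (fun _ : ℝ => (0:ℝ)) = (fun _ : ℝ => (0:ℝ)) := fun _ => rfl
    simp [hu₃, deriv_const]
end

section
/- For i = 1, 2, 3 let mᵢ ∈ ℕ, nᵢ ∈ ℕ with nᵢ ≥ 1, let aᵢ, bᵢ, cᵢ, dᵢ ∈ ℝ, and let Zᵢ : ℝ → ℝ be continuously differentiable. Define uᵢ = (uᵢ₁, uᵢ₂, uᵢ₃) : ℝ³ → ℝ³ by uᵢ₁(x,y,z) = Zᵢ(z)·P^u_{mᵢ,nᵢ}(x,y), uᵢ₂(x,y,z) = −(mᵢ/nᵢ)·Zᵢ(z)·P^v_{mᵢ,nᵢ}(x,y), uᵢ₃ = 0, where P^u_{mᵢ,nᵢ}, P^v_{mᵢ,nᵢ} use the coefficients aᵢ, bᵢ, cᵢ, dᵢ.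 Suppose one of the following holds: cᵢ = dᵢ = 0 for all i, or bᵢ = cᵢ = 0 for all i, or aᵢ = cᵢ = 0 for all i. Then ∫_Ω ((u₁·∇)u₂) · u₃ = 0, where Ω = [0,2π]²×[−1,1], ((u₁·∇)u₂)_j = Σ_k u₁ₖ ∂_k u₂ⱼ, and · is the Euclidean scalar product in ℝ³. -/
open Real MeasureTheory

/-!
In each coefficient pattern all three fields are anti-equivariant under one reflection `R` of
the torus — `(x, y) ↦ (x, 2π - y)`, `(2π - x, y)` or `(2π - x, 2π - y)` respectively — in the
sense that `u (R p) = -L (u p)`, where `L = diag(ε₁, ε₂, 1)` is the linear part of `R`.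
The chain rule for the affine map `R` then gives `∇u₂ (R p) = -L ∇u₂(p) L`, so the density
`((u₁·∇)u₂)·u₃` changes sign under `R`. As `R` preserves `Ω` and Lebesgue measure, the
integral vanishes.
-/

theorem setIntegral_eq_zero_of_comp_eq_neg {α E : Type*} [MeasurableSpace α]
    [NormedAddCommGroup E] [NormedSpace ℝ E] {μ : Measure α} {σ : α → α}
    (hinv : Function.Involutive σ) (hσ : MeasurePreserving σ μ μ) {s : Set α} (hs : σ ⁻¹' s = s)
    {f : α → E} (hf : ∀ p, f (σ p) = -f p) : ∫ p in s, f p ∂μ = 0 := by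
  have h := hσ.setIntegral_preimage_emb
    (MeasurableEquiv.ofInvolutive σ hinv hσ.measurable).measurableEmbedding f s
  rw [hs] at h
  simp only [hf, integral_neg] at h
  have h2 : (2 : ℝ) • ∫ p in s, f p ∂μ = 0 := by
    rw [two_smul]; nth_rewrite 1 [← h]; exact neg_add_cancel _
  exact (smul_eq_zero.mp h2).resolve_left two_ne_zero

noncomputable def reflect (ε t : ℝ) : ℝ := π + ε * (t - π)

section reflect

variable {ε : ℝ}

lemma reflect_one : reflect 1 = id := funext fun t => by simp [reflect]

lemma reflect_neg_one : reflect (-1) = fun t => 2 * π - t := funext fun t => by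
  unfold reflect; ring

lemma reflect_involutive (hε : ε ^ 2 = 1) : Function.Involutive (reflect ε) := fun t => by
  unfold reflect; linear_combination (t - π) * hε

lemma measurePreserving_reflect (hε : ε ^ 2 = 1) : MeasurePreserving (reflect ε) := by
  rcases sq_eq_one_iff.mp hε with rfl | rfl
  · rw [reflect_one]; exact .id volume
  · rw [reflect_neg_one]; exact Measure.measurePreserving_sub_left volume (2 * π)

lemma preimage_reflect_Icc (hε : ε ^ 2 = 1) :
    reflect ε ⁻¹' Set.Icc 0 (2 * π) = Set.Icc 0 (2 * π) := by
  rcases sq_eq_one_iff.mp hε with rfl | rfl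
  · rw [reflect_one, Set.preimage_id]
  · rw [reflect_neg_one, Set.preimage_const_sub_Icc, sub_self, sub_zero]

lemma sin_natCast_mul_reflect (hε : ε ^ 2 = 1) (k : ℕ) (t : ℝ) :
    Real.sin (k * reflect ε t) = ε * Real.sin (k * t) := by
  rcases sq_eq_one_iff.mp hε with rfl | rfl
  · rw [reflect_one, id, one_mul]
  · rw [reflect_neg_one, mul_sub, Real.sin_nat_mul_two_pi_sub, neg_one_mul]

lemma cos_natCast_mul_reflect (hε : ε ^ 2 = 1) (k : ℕ) (t : ℝ) :
    Real.cos (k * reflect ε t) = Real.cos (k * t) := by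
  rcases sq_eq_one_iff.mp hε with rfl | rfl
  · rw [reflect_one, id]
  · rw [reflect_neg_one, mul_sub, Real.cos_nat_mul_two_pi_sub]

lemma deriv_comp_reflect (g : ℝ → ℝ) (t : ℝ) :
    deriv (fun t => g (reflect ε t)) t = ε * deriv g (reflect ε t) := by
  simp only [reflect]
  rw [deriv_comp_sub_const (f := fun u => g (π + ε * u)),
    deriv_comp_mul_left (f := fun v => g (π + v)), deriv_comp_const_add, smul_eq_mul]

lemma deriv_apply_reflect_of_comp_reflect (hε : ε ^ 2 = 1) {g h : ℝ → ℝ} {s : ℝ}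
    (hgh : ∀ t, g (reflect ε t) = s * h t) (t : ℝ) :
    deriv g (reflect ε t) = s * ε * deriv h t := by
  have := deriv_comp_reflect (ε := ε) g t
  rw [funext hgh, deriv_const_mul_field'] at this
  linear_combination (-ε) * this - deriv g (reflect ε t) * hε

end reflect

noncomputable def reflectXY (ε₁ ε₂ : ℝ) : ℝ × ℝ × ℝ → ℝ × ℝ × ℝ :=
  Prod.map (reflect ε₁) (Prod.map (reflect ε₂) id)

section reflectXY

variable {ε₁ ε₂ : ℝ}

lemma reflectXY_involutive (hε₁ : ε₁ ^ 2 = 1) (hε₂ : ε₂ ^ 2 = 1) :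
    Function.Involutive (reflectXY ε₁ ε₂) :=
  (reflect_involutive hε₁).prodMap ((reflect_involutive hε₂).prodMap fun _ => rfl)

lemma measurePreserving_reflectXY (hε₁ : ε₁ ^ 2 = 1) (hε₂ : ε₂ ^ 2 = 1) :
    MeasurePreserving (reflectXY ε₁ ε₂) :=
  (measurePreserving_reflect hε₁).prod ((measurePreserving_reflect hε₂).prod (.id volume))

lemma preimage_reflectXY_Icc (hε₁ : ε₁ ^ 2 = 1) (hε₂ : ε₂ ^ 2 = 1) (z₀ z₁ : ℝ) :
    reflectXY ε₁ ε₂ ⁻¹' Set.Icc (0, 0, z₀) (2 * π, 2 * π, z₁)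
      = Set.Icc (0, 0, z₀) (2 * π, 2 * π, z₁) := by
  simp only [reflectXY, Set.Icc_prod_eq, Set.preimage_prod_map_prod, preimage_reflect_Icc hε₁,
    preimage_reflect_Icc hε₂, Set.preimage_id]

def IsAntiEquivariant (ε₁ ε₂ : ℝ) (V : Fin 3 → ℝ → ℝ → ℝ → ℝ) : Prop :=
  ∀ j x y z, V j (reflect ε₁ x) (reflect ε₂ y) z = -![ε₁, ε₂, 1] j * V j x y z

noncomputable def trilinearDensity (u v w : Fin 3 → ℝ → ℝ → ℝ → ℝ) (p : ℝ × ℝ × ℝ) : ℝ :=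
  ∑ j : Fin 3,
    (u 0 p.1 p.2.1 p.2.2 * deriv (fun x' => v j x' p.2.1 p.2.2) p.1
      + u 1 p.1 p.2.1 p.2.2 * deriv (fun y' => v j p.1 y' p.2.2) p.2.1
      + u 2 p.1 p.2.1 p.2.2 * deriv (fun z' => v j p.1 p.2.1 z') p.2.2)
      * w j p.1 p.2.1 p.2.2

lemma trilinearDensity_reflectXY (hε₁ : ε₁ ^ 2 = 1) (hε₂ : ε₂ ^ 2 = 1)
    {u v w : Fin 3 → ℝ → ℝ → ℝ → ℝ} (hu : IsAntiEquivariant ε₁ ε₂ u)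
    (hv : IsAntiEquivariant ε₁ ε₂ v) (hw : IsAntiEquivariant ε₁ ε₂ w) (p : ℝ × ℝ × ℝ) :
    trilinearDensity u v w (reflectXY ε₁ ε₂ p) = -trilinearDensity u v w p := by
  obtain ⟨x, y, z⟩ := p
  simp only [trilinearDensity, reflectXY, Prod.map, id, ← Finset.sum_neg_distrib]
  refine Finset.sum_congr rfl fun j _ => ?_
  set e : ℝ := ![ε₁, ε₂, 1] j
  have he : e ^ 2 = 1 := by fin_cases j <;> simp [e, hε₁, hε₂]
  have hx : deriv (fun x' => v j x' (reflect ε₂ y) z) (reflect ε₁ x)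
      = -e * ε₁ * deriv (fun x' => v j x' y z) x :=
    deriv_apply_reflect_of_comp_reflect hε₁ (fun t => hv j t y z) x
  have hy : deriv (fun y' => v j (reflect ε₁ x) y' z) (reflect ε₂ y)
      = -e * ε₂ * deriv (fun y' => v j x y' z) y :=
    deriv_apply_reflect_of_comp_reflect hε₂ (fun t => hv j x t z) y
  have hz : deriv (fun z' => v j (reflect ε₁ x) (reflect ε₂ y) z') z
      = -e * deriv (fun z' => v j x y z') z := by
    simp only [hv j x y, deriv_const_mul_field']
    rfl
  have hwj : w j (reflect ε₁ x) (reflect ε₂ y) z = -e * w j x y z := hw j x y z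
  rw [hu 0, hu 1, hu 2, hwj, hx, hy, hz]
  change (-ε₁ * _ * _ + -ε₂ * _ * _ + -1 * _ * _) * _ = _
  ring_nf
  rw [he, hε₁, hε₂]
  ring

end reflectXY

section StokesField

variable {ε₁ ε₂ : ℝ} (m n : ℕ) {a b c d : ℝ}

/- The reflection multiplies the coefficients `a, b, c, d` of `Pu` by `ε₂, ε₁ε₂, ε₁, 1` and
those of `Pv` by `ε₁, 1, ε₂, ε₁ε₂`; the hypotheses on the coefficients make these `-ε₁ Pu`
and `-ε₂ Pv`. -/
lemma Pu_reflect (hε₁ : ε₁ ^ 2 = 1) (hε₂ : ε₂ ^ 2 = 1) (hc : c = 0) (ha : (ε₁ + ε₂) * a = 0)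
    (hb : (1 + ε₂) * b = 0) (hd : (1 + ε₁) * d = 0) (x y : ℝ) :
    Pu m n a b c d (reflect ε₁ x) (reflect ε₂ y) = -ε₁ * Pu m n a b c d x y := by
  simp only [Pu, sin_natCast_mul_reflect hε₁, sin_natCast_mul_reflect hε₂,
    cos_natCast_mul_reflect hε₁, cos_natCast_mul_reflect hε₂, hc]
  linear_combination Real.cos (m * x) * Real.sin (n * y) * ha
    - ε₁ * Real.sin (m * x) * Real.sin (n * y) * hb + Real.cos (m * x) * Real.cos (n * y) * hd

lemma Pv_reflect (hε₁ : ε₁ ^ 2 = 1) (hε₂ : ε₂ ^ 2 = 1) (hc : c = 0) (ha : (ε₁ + ε₂) * a = 0)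
    (hb : (1 + ε₂) * b = 0) (hd : (1 + ε₁) * d = 0) (x y : ℝ) :
    Pv m n a b c d (reflect ε₁ x) (reflect ε₂ y) = -ε₂ * Pv m n a b c d x y := by
  simp only [Pv, sin_natCast_mul_reflect hε₁, sin_natCast_mul_reflect hε₂,
    cos_natCast_mul_reflect hε₁, cos_natCast_mul_reflect hε₂, hc]
  linear_combination Real.sin (m * x) * Real.cos (n * y) * ha
    + Real.cos (m * x) * Real.cos (n * y) * hb - ε₂ * Real.sin (m * x) * Real.sin (n * y) * hd

lemma isAntiEquivariant_of_Pu_Pv (hε₁ : ε₁ ^ 2 = 1) (hε₂ : ε₂ ^ 2 = 1) (hc : c = 0)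
    (ha : (ε₁ + ε₂) * a = 0) (hb : (1 + ε₂) * b = 0) (hd : (1 + ε₁) * d = 0) {Z : ℝ → ℝ}
    {V : Fin 3 → ℝ → ℝ → ℝ → ℝ} (hV₁ : ∀ x y z, V 0 x y z = Z z * Pu m n a b c d x y)
    (hV₂ : ∀ x y z, V 1 x y z = -((m : ℝ) / (n : ℝ)) * Z z * Pv m n a b c d x y)
    (hV₃ : ∀ x y z, V 2 x y z = 0) :
    IsAntiEquivariant ε₁ ε₂ V := by
  intro j x y z
  fin_cases j
  · show V 0 _ _ z = -ε₁ * V 0 x y z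
    rw [hV₁, hV₁, Pu_reflect m n hε₁ hε₂ hc ha hb hd]
    ring
  · show V 1 _ _ z = -ε₂ * V 1 x y z
    rw [hV₂, hV₂, Pv_reflect m n hε₁ hε₂ hc ha hb hd]
    ring
  · show V 2 _ _ z = -1 * V 2 x y z
    rw [hV₃, hV₃, mul_zero]

end StokesField

theorem stmt_17_general (m n : Fin 3 → ℕ)
    (a b c d : Fin 3 → ℝ) (Z : Fin 3 → ℝ → ℝ)
    (U : Fin 3 → Fin 3 → ℝ → ℝ → ℝ → ℝ)
    (hU₁ : ∀ i x y z, U i 0 x y z = Z i z * Pu (m i) (n i) (a i) (b i) (c i) (d i) x y)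
    (hU₂ : ∀ i x y z, U i 1 x y z
      = -((m i : ℝ) / (n i : ℝ)) * Z i z * Pv (m i) (n i) (a i) (b i) (c i) (d i) x y)
    (hU₃ : ∀ i x y z, U i 2 x y z = 0)
    (hcoef : (∀ i, c i = 0 ∧ d i = 0) ∨ (∀ i, b i = 0 ∧ c i = 0) ∨
      (∀ i, a i = 0 ∧ c i = 0)) :
    ∫ p in Set.Icc ((0 : ℝ), (0 : ℝ), (-1 : ℝ)) (2 * π, 2 * π, (1 : ℝ)),
      ∑ j : Fin 3,
        (U 0 0 p.1 p.2.1 p.2.2 * deriv (fun x' => U 1 j x' p.2.1 p.2.2) p.1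
          + U 0 1 p.1 p.2.1 p.2.2 * deriv (fun y' => U 1 j p.1 y' p.2.2) p.2.1
          + U 0 2 p.1 p.2.1 p.2.2 * deriv (fun z' => U 1 j p.1 p.2.1 z') p.2.2)
          * U 2 j p.1 p.2.1 p.2.2 = 0 := by
  obtain ⟨ε₁, ε₂, hε₁, hε₂, hsymm⟩ : ∃ ε₁ ε₂ : ℝ, ε₁ ^ 2 = 1 ∧ ε₂ ^ 2 = 1 ∧ ∀ i,
      c i = 0 ∧ (ε₁ + ε₂) * a i = 0 ∧ (1 + ε₂) * b i = 0 ∧ (1 + ε₁) * d i = 0 := by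
    rcases hcoef with h | h | h
    · exact ⟨1, -1, by norm_num, by norm_num, fun i => by norm_num [h i]⟩
    · exact ⟨-1, 1, by norm_num, by norm_num, fun i => by norm_num [h i]⟩
    · exact ⟨-1, -1, by norm_num, by norm_num, fun i => by norm_num [h i]⟩
  have hU : ∀ i, IsAntiEquivariant ε₁ ε₂ (U i) := fun i =>
    have ⟨hc, ha, hb, hd⟩ := hsymm i
    isAntiEquivariant_of_Pu_Pv (m i) (n i) hε₁ hε₂ hc ha hb hd (hU₁ i) (hU₂ i) (hU₃ i)
  exact setIntegral_eq_zero_of_comp_eq_neg (reflectXY_involutive hε₁ hε₂)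
    (measurePreserving_reflectXY hε₁ hε₂) (preimage_reflectXY_Icc hε₁ hε₂ _ _)
    (trilinearDensity_reflectXY hε₁ hε₂ (hU 0) (hU 1) (hU 2))

/-- Vanishing of the trilinear term ∫_Ω ((u₁·∇)u₂)·u₃ for three constant-pressure
Stokes eigenfunction shaped fields whose coefficients follow one of the three
admissible patterns. -/
theorem stmt_17 (m n : Fin 3 → ℕ) (hn : ∀ i, 1 ≤ n i)
    (a b c d : Fin 3 → ℝ) (Z : Fin 3 → ℝ → ℝ) (hZ : ∀ i, ContDiff ℝ 1 (Z i))
    (U : Fin 3 → Fin 3 → ℝ → ℝ → ℝ → ℝ)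
    (hU₁ : ∀ i x y z, U i 0 x y z = Z i z * Pu (m i) (n i) (a i) (b i) (c i) (d i) x y)
    (hU₂ : ∀ i x y z, U i 1 x y z
      = -((m i : ℝ) / (n i : ℝ)) * Z i z * Pv (m i) (n i) (a i) (b i) (c i) (d i) x y)
    (hU₃ : ∀ i x y z, U i 2 x y z = 0)
    (hcoef : (∀ i, c i = 0 ∧ d i = 0) ∨ (∀ i, b i = 0 ∧ c i = 0) ∨
      (∀ i, a i = 0 ∧ c i = 0)) :
    ∫ p in Set.Icc ((0 : ℝ), (0 : ℝ), (-1 : ℝ)) (2 * π, 2 * π, (1 : ℝ)),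
      ∑ j : Fin 3,
        (U 0 0 p.1 p.2.1 p.2.2 * deriv (fun x' => U 1 j x' p.2.1 p.2.2) p.1
          + U 0 1 p.1 p.2.1 p.2.2 * deriv (fun y' => U 1 j p.1 y' p.2.2) p.2.1
          + U 0 2 p.1 p.2.1 p.2.2 * deriv (fun z' => U 1 j p.1 p.2.1 z') p.2.2)
          * U 2 j p.1 p.2.1 p.2.2 = 0 :=
  stmt_17_general m n a b c d Z U hU₁ hU₂ hU₃ hcoef
end

section
/- Let α, σ, γ, δ ∈ ℝ with α² + σ² > 0, set κ = √(α² + σ²) and D = [(γ−δ)² + κ²]·[(γ+δ)² + κ²], and define υ : ℝ → ℝ by υ(z) = −(1/D)·[ 2γδ·sin(γz)·sin(δz) + (κ² + γ² + δ²)·cos(γz)·cos(δz) + ( γ·sin γ·cos δ·(κ² + γ² − δ²) + δ·cos γ·sin δ·(κ² − γ² + δ²) )/( κ·sinh κ ) · cosh(κz) ]. Then υ''(z) − κ²·υ(z) = cos(γz)·cos(δz) for all z ∈ ℝ, and υ'(1) = υ'(−1) = 0. -/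
open Real

/-! With `S z = sin (γ z) sin (δ z)` and `C z = cos (γ z) cos (δ z)` one has
`S'' = 2γδ C - (γ² + δ²) S` and `C'' = 2γδ S - (γ² + δ²) C`, so `d²/dz² - κ²` preserves the span
of `S, C` and acts there by the symmetric matrix with diagonal `-(γ² + δ² + κ²)` and off-diagonal
`2γδ`, whose determinant `(γ² + δ² + κ²)² - 4γ²δ²` is `D`. Inverting it gives the coefficients of
`S` and `C` in `υ`; `cosh (κ z)` is in the kernel, and its coefficient is chosen so that
`υ'(1) = 0`. As `υ` is even, `υ'` is odd, whence `υ'(-1) = 0`. -/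

theorem Function.Even.deriv {𝕜 F : Type*} [NontriviallyNormedField 𝕜] [NormedAddCommGroup F]
    [NormedSpace 𝕜 F] {f : 𝕜 → F} (hf : f.Even) : (deriv f).Odd := fun x => by
  simpa [funext hf] using deriv_comp_neg f (-x)

section TrigProducts

variable (γ δ : ℝ)

theorem hasDerivAt_sin_mul_sin (z : ℝ) :
    HasDerivAt (fun z => sin (γ * z) * sin (δ * z))
      (γ * cos (γ * z) * sin (δ * z) + δ * sin (γ * z) * cos (δ * z)) z :=
  ((hasDerivAt_const_mul γ).sin.mul (hasDerivAt_const_mul δ).sin).congr_deriv (by ring)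

theorem hasDerivAt_cos_mul_cos (z : ℝ) :
    HasDerivAt (fun z => cos (γ * z) * cos (δ * z))
      (-(γ * sin (γ * z) * cos (δ * z) + δ * cos (γ * z) * sin (δ * z))) z :=
  ((hasDerivAt_const_mul γ).cos.mul (hasDerivAt_const_mul δ).cos).congr_deriv (by ring)

theorem hasDerivAt_deriv_sin_mul_sin (z : ℝ) :
    HasDerivAt (fun z => γ * cos (γ * z) * sin (δ * z) + δ * sin (γ * z) * cos (δ * z))
      (2 * γ * δ * (cos (γ * z) * cos (δ * z)) - (γ ^ 2 + δ ^ 2) * (sin (γ * z) * sin (δ * z))) z :=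
  ((((hasDerivAt_const_mul γ).cos.const_mul γ).mul (hasDerivAt_const_mul δ).sin).add
    (((hasDerivAt_const_mul γ).sin.const_mul δ).mul (hasDerivAt_const_mul δ).cos)).congr_deriv
    (by ring)

theorem hasDerivAt_deriv_cos_mul_cos (z : ℝ) :
    HasDerivAt (fun z => -(γ * sin (γ * z) * cos (δ * z) + δ * cos (γ * z) * sin (δ * z)))
      (2 * γ * δ * (sin (γ * z) * sin (δ * z)) - (γ ^ 2 + δ ^ 2) * (cos (γ * z) * cos (δ * z))) z :=
  ((((hasDerivAt_const_mul γ).sin.const_mul γ).mul (hasDerivAt_const_mul δ).cos).add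
    (((hasDerivAt_const_mul γ).cos.const_mul δ).mul (hasDerivAt_const_mul δ).sin)).neg.congr_deriv
    (by ring)

end TrigProducts

noncomputable def trigCoshProfile (γ δ κ P Q R : ℝ) (z : ℝ) : ℝ :=
  P * (sin (γ * z) * sin (δ * z)) + Q * (cos (γ * z) * cos (δ * z)) + R * cosh (κ * z)

namespace trigCoshProfile

variable (γ δ κ P Q R : ℝ)

theorem even : (trigCoshProfile γ δ κ P Q R).Even := fun z => by
  simp only [trigCoshProfile, mul_neg, sin_neg, cos_neg, cosh_neg, neg_mul, neg_neg]

theorem deriv_eq : deriv (trigCoshProfile γ δ κ P Q R) = fun z =>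
    P * (γ * cos (γ * z) * sin (δ * z) + δ * sin (γ * z) * cos (δ * z))
      + Q * -(γ * sin (γ * z) * cos (δ * z) + δ * cos (γ * z) * sin (δ * z))
      + R * (κ * sinh (κ * z)) :=
  funext fun z => ((((hasDerivAt_sin_mul_sin γ δ z).const_mul P).add
    ((hasDerivAt_cos_mul_cos γ δ z).const_mul Q)).add
    (((hasDerivAt_const_mul κ).cosh.const_mul R).congr_deriv (by ring))).deriv

theorem deriv_deriv_sub (z : ℝ) :
    deriv (deriv (trigCoshProfile γ δ κ P Q R)) z - κ ^ 2 * trigCoshProfile γ δ κ P Q R z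
      = (2 * γ * δ * P - (γ ^ 2 + δ ^ 2 + κ ^ 2) * Q) * (cos (γ * z) * cos (δ * z))
        + (2 * γ * δ * Q - (γ ^ 2 + δ ^ 2 + κ ^ 2) * P) * (sin (γ * z) * sin (δ * z)) := by
  have h := (((hasDerivAt_deriv_sin_mul_sin γ δ z).const_mul P).add
    ((hasDerivAt_deriv_cos_mul_cos γ δ z).const_mul Q)).add
    (((hasDerivAt_const_mul κ).sinh.const_mul κ).const_mul R)
  simp only [Pi.add_def] at h
  rw [deriv_eq, h.deriv, trigCoshProfile]
  ring

end trigCoshProfile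

/-- The explicit function υ solves the Neumann problem
υ'' − κ²υ = cos(γz)cos(δz) on ℝ with υ'(±1) = 0, where κ = √(α² + σ²). -/
theorem stmt_18 (α σ γ δ : ℝ) (h : 0 < α ^ 2 + σ ^ 2)
    (κ D : ℝ) (hκ : κ = Real.sqrt (α ^ 2 + σ ^ 2))
    (hD : D = ((γ - δ) ^ 2 + κ ^ 2) * ((γ + δ) ^ 2 + κ ^ 2))
    (υ : ℝ → ℝ)
    (hυ : ∀ z : ℝ, υ z = -(1 / D) *
      (2 * γ * δ * Real.sin (γ * z) * Real.sin (δ * z)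
        + (κ ^ 2 + γ ^ 2 + δ ^ 2) * Real.cos (γ * z) * Real.cos (δ * z)
        + (γ * Real.sin γ * Real.cos δ * (κ ^ 2 + γ ^ 2 - δ ^ 2)
            + δ * Real.cos γ * Real.sin δ * (κ ^ 2 - γ ^ 2 + δ ^ 2))
          / (κ * Real.sinh κ) * Real.cosh (κ * z))) :
    (∀ z : ℝ, deriv (deriv υ) z - κ ^ 2 * υ z = Real.cos (γ * z) * Real.cos (δ * z)) ∧
    deriv υ 1 = 0 ∧ deriv υ (-1) = 0 := by
  have hκ_pos : 0 < κ := hκ ▸ Real.sqrt_pos.mpr h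
  have hD_pos : 0 < D := by rw [hD]; positivity
  have hsinh_pos : 0 < sinh κ := sinh_pos_iff.mpr hκ_pos
  set P := -(2 * γ * δ) / D with hP
  set Q := -(κ ^ 2 + γ ^ 2 + δ ^ 2) / D with hQ
  set R := -(γ * sin γ * cos δ * (κ ^ 2 + γ ^ 2 - δ ^ 2)
      + δ * cos γ * sin δ * (κ ^ 2 - γ ^ 2 + δ ^ 2)) / (D * (κ * sinh κ)) with hR
  obtain rfl : υ = trigCoshProfile γ δ κ P Q R := funext fun z => by
    rw [hυ, trigCoshProfile, hP, hQ, hR]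
    field_simp
    ring
  have hneumann : deriv (trigCoshProfile γ δ κ P Q R) 1 = 0 := by
    rw [trigCoshProfile.deriv_eq, hP, hQ, hR]
    field_simp
    ring
  refine ⟨fun z => ?_, hneumann, ?_⟩
  · have hcos : 2 * γ * δ * P - (γ ^ 2 + δ ^ 2 + κ ^ 2) * Q = 1 := by
      rw [hP, hQ]
      field_simp
      rw [hD]
      ring
    have hsin : 2 * γ * δ * Q - (γ ^ 2 + δ ^ 2 + κ ^ 2) * P = 0 := by
      rw [hP, hQ]
      ring
    rw [trigCoshProfile.deriv_deriv_sub, hcos, hsin]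
    ring
  · rw [(trigCoshProfile.even γ δ κ P Q R).deriv, hneumann, neg_zero]
end
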